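/- arXiv:1706.03669 — 3 statements merged into one kernel-verified Lean document; each statement's English description precedes it below -/
import Mathlib

section
/- Let t₀ ∈ ℝ₊. The evaluation map (x,t) ↦ x_t from D_exp(S) × [0,t₀] to S^Δ is measurable with respect to F_{t₀} ⊗ B([0,t₀]). Moreover, for t₀ > 0, the set A := {(x,t) ∈ D_exp(S) × (0,t₀] : the left limit x_{t−} exists in S^Δ} belongs to F_{t₀−} ⊗ B((0,t₀]), and the map (x,t) ↦ x_{t−} from A to S^Δ is F_{t₀−} ⊗ B((0,t₀])-measurable. -/
open Filter Topology Set MeasureTheory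
open scoped ENNReal NNReal

noncomputable section

namespace LocSkor

/-- Paths with values in the one-point compactification. -/
abbrev Path (S : Type*) := ℝ → OnePoint S

variable {S : Type*} [TopologicalSpace S]

/-- Distance between two points of `S^Δ`, with junk value `0` if one of them is `Δ`. -/
noncomputable def dd (ρ : S → S → ℝ) : OnePoint S → OnePoint S → ℝ :=
  fun a b => Option.elim (show Option S from a) 0
    (fun a' => Option.elim (show Option S from b) 0 (fun b' => ρ a' b'))

/-- The set of times at which the path has already exploded. -/
def xiSet (x : Path S) : Set ℝ := {t : ℝ | x t = OnePoint.infty}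

/-- The path explodes in finite time, i.e. `ξ(x) < ∞`. -/
def explodes (x : Path S) : Prop := (xiSet x).Nonempty

/-- The (real-valued) explosion time `ξ(x)`; junk value `0` if the path never explodes. -/
def xiR (x : Path S) : ℝ := sInf (xiSet x)

/-- The `[0,∞]`-valued explosion time `ξ(x)`. -/
def xiE (x : Path S) : ℝ≥0∞ := ⨅ t ∈ xiSet x, ENNReal.ofReal t

/-- The range `{x_s, 0 ≤ s < ξ(x)}` of the path, as a subset of `S`. -/
def pathRange (x : Path S) : Set S := {a : S | ∃ s : ℝ, 0 ≤ s ∧ x s = (a : OnePoint S)}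

/-- `x` is an exploding cadlag path: `x_t = Δ` exactly for `t ≥ ξ(x)` (and we normalize
`x` on negative times), `x` is right-continuous before explosion, and has left limits in `S`
at every point of `(0, ξ(x))`. -/
def IsDexp (x : Path S) : Prop :=
  (∀ t ≤ (0:ℝ), x t = x 0) ∧
  (∀ ⦃s t : ℝ⦄, s ≤ t → x s = OnePoint.infty → x t = OnePoint.infty) ∧
  IsClosed (xiSet x) ∧
  (∀ t : ℝ, 0 ≤ t → x t ≠ OnePoint.infty → Tendsto x (𝓝[>] t) (𝓝 (x t))) ∧
  (∀ t : ℝ, 0 < t → x t ≠ OnePoint.infty →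
    ∃ a : S, Tendsto x (𝓝[<] t) (𝓝 (a : OnePoint S)))

/-- `x` belongs to the local cadlag space `𝔻_loc(S)`. -/
def IsDloc (x : Path S) : Prop :=
  IsDexp x ∧
  ((explodes x ∧ 0 < xiR x ∧ IsCompact (closure (pathRange x))) →
    ∃ a : S, Tendsto x (𝓝[<] xiR x) (𝓝 (a : OnePoint S)))

/-- `x` belongs to the global cadlag space `𝔻(S)`, i.e. `ξ(x) = ∞`. -/
def IsDglob (x : Path S) : Prop := IsDexp x ∧ ∀ t : ℝ, x t ≠ OnePoint.infty

/-- `x` is a cadlag path with values in the compact space `S^Δ`, i.e. `x ∈ 𝔻(S^Δ)`. -/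
def IsCadlagDelta (x : Path S) : Prop :=
  (∀ t ≤ (0:ℝ), x t = x 0) ∧
  (∀ t : ℝ, 0 ≤ t → Tendsto x (𝓝[>] t) (𝓝 (x t))) ∧
  (∀ t : ℝ, 0 < t → ∃ a : OnePoint S, Tendsto x (𝓝[<] t) (𝓝 a))

/-- The space `𝔻_exp(S)` of exploding cadlag paths. -/
def DexpT (S : Type*) [TopologicalSpace S] : Type _ := {x : Path S // IsDexp x}

/-- The space `𝔻_loc(S)`. -/
def DlocT (S : Type*) [TopologicalSpace S] : Type _ := {x : Path S // IsDloc x}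

/-- The space `𝔻(S)`. -/
def DglobT (S : Type*) [TopologicalSpace S] : Type _ := {x : Path S // IsDglob x}

/-- The space `𝔻(S^Δ)`. -/
def DDeltaT (S : Type*) [TopologicalSpace S] : Type _ := {x : Path S // IsCadlagDelta x}

/-! ### Time changes `Λ̃` and `Λ` -/

/-- `l` is an increasing bijection of `ℝ₊` (extended by the identity on negative reals):
the class `Λ̃`. -/
def IsTimeBij (l : ℝ → ℝ) : Prop :=
  StrictMono l ∧ Function.Surjective l ∧ ∀ t ≤ (0:ℝ), l t = t

/-- `‖log λ̇‖_t ≤ ε`, expressed through slopes. -/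
def LogSlopeLe (l : ℝ → ℝ) (t ε : ℝ) : Prop :=
  ∀ s₁ s₂ : ℝ, 0 ≤ s₁ → s₁ < s₂ → s₂ ≤ t → |Real.log ((l s₂ - l s₁) / (s₂ - s₁))| ≤ ε

/-- `‖λ - id‖_t ≤ ε`. -/
def IdDistLe (l : ℝ → ℝ) (t ε : ℝ) : Prop := ∀ s : ℝ, 0 ≤ s → s ≤ t → |l s - s| ≤ ε

/-- `l` belongs to the class `Λ` of increasing bijections of `ℝ₊` which are locally
Lipschitz together with their inverses (equivalently, `‖log λ̇‖_t < ∞` for all `t`). -/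
def IsLipTimeBij (l : ℝ → ℝ) : Prop :=
  IsTimeBij l ∧ ∀ t : ℝ, 0 < t → ∃ C : ℝ, LogSlopeLe l t C

/-- `ξ(x) < ∞` together with the relative compactness in `S` of `{x_s, s < ξ(x)}`. -/
def Case1 (x : Path S) : Prop := explodes x ∧ IsCompact (closure (pathRange x))

/-- Convergence criterion of Theorem 2.6, parametrized by the class of time changes and
by the norm used on them. -/
def ConvGen (ρ : S → S → ℝ) (Lam : (ℝ → ℝ) → Prop) (Nrm : (ℝ → ℝ) → ℝ → ℝ → Prop)
    (xk : ℕ → Path S) (x : Path S) : Prop :=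
  ∃ l : ℕ → ℝ → ℝ, (∀ k, Lam (l k)) ∧
    (Case1 x →
      ((∀ᶠ k in atTop, ∀ s : ℝ, 0 ≤ s → s < l k (xiR x) → xk k s ≠ OnePoint.infty) ∧
      (∀ ε > (0:ℝ), ∀ᶠ k in atTop, ∀ s : ℝ, 0 ≤ s → s < xiR x →
        dd ρ (x s) (xk k (l k s)) ≤ ε) ∧
      Tendsto (fun k => xk k (l k (xiR x))) atTop (𝓝 (OnePoint.infty : OnePoint S)) ∧
      (∀ ε > (0:ℝ), ∀ᶠ k in atTop, Nrm (l k) (xiR x) ε))) ∧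
    (¬ Case1 x →
      ∀ t : ℝ, 0 ≤ t → x t ≠ OnePoint.infty →
        ((∀ᶠ k in atTop, xk k (l k t) ≠ OnePoint.infty) ∧
        (∀ ε > (0:ℝ), ∀ᶠ k in atTop, ∀ s : ℝ, 0 ≤ s → s ≤ t →
          dd ρ (x s) (xk k (l k s)) ≤ ε) ∧
        (∀ ε > (0:ℝ), ∀ᶠ k in atTop, Nrm (l k) t ε)))

/-- Convergence criterion of Theorem 2.6 (with `Λ` and `‖log λ̇‖`). -/
def ConvLoc (ρ : S → S → ℝ) (xk : ℕ → Path S) (x : Path S) : Prop :=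
  ConvGen ρ IsLipTimeBij LogSlopeLe xk x

/-- Convergence criterion of Theorem 2.7 (with `Λ̃` and `‖λ - id‖`). -/
def ConvLocTilde (ρ : S → S → ℝ) (xk : ℕ → Path S) (x : Path S) : Prop :=
  ConvGen ρ IsTimeBij IdDistLe xk x

/-! ### σ-algebras -/

/-- The Borel σ-algebra of `S^Δ`. -/
def msOP (S : Type*) [TopologicalSpace S] : MeasurableSpace (OnePoint S) := borel _

/-- The σ-algebra `𝓕_t = σ(X_s, 0 ≤ s ≤ t)`. -/
def filt {α : Type*} (ev : α → Path S) (t : ℝ) : MeasurableSpace α :=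
  ⨆ s ∈ Icc (0:ℝ) t, MeasurableSpace.comap (fun x => ev x s) (msOP S)

/-- The σ-algebra `𝓕_{t-} = σ(X_s, 0 ≤ s < t)`. -/
def filtLt {α : Type*} (ev : α → Path S) (t : ℝ) : MeasurableSpace α :=
  ⨆ s ∈ Ico (0:ℝ) t, MeasurableSpace.comap (fun x => ev x s) (msOP S)

/-- The σ-algebra `𝓕 = σ(X_s, 0 ≤ s < ∞)`. -/
def filtAll {α : Type*} (ev : α → Path S) : MeasurableSpace α :=
  ⨆ s ∈ Ici (0:ℝ), MeasurableSpace.comap (fun x => ev x s) (msOP S)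

/-- The σ-algebra `𝓕_{t+} = ⋂_{s>t} 𝓕_s`. -/
def filtPlus {α : Type*} (ev : α → Path S) (t : ℝ) : MeasurableSpace α :=
  ⨅ s ∈ Ioi t, filt ev s

/-- `τ` is an `(𝓕_t)`-stopping time. -/
def IsStopping {α : Type*} (ev : α → Path S) (τ : α → ℝ≥0∞) : Prop :=
  ∀ t : ℝ, 0 ≤ t → MeasurableSet[filt ev t] {x | τ x ≤ ENNReal.ofReal t}

open Classical in
/-- Evaluation of a path at a `[0,∞]`-valued time (`Δ` at time `∞`). -/
def evalE (x : Path S) (t : ℝ≥0∞) : OnePoint S :=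
  if t = ⊤ then OnePoint.infty else x t.toReal

open Classical in
/-- The left limit `x_{t-}`, junk value `Δ` if it does not exist. -/
def leftLimVal (x : Path S) (t : ℝ) : OnePoint S :=
  if h : ∃ a : OnePoint S, Tendsto x (𝓝[<] t) (𝓝 a) then h.choose else OnePoint.infty

/-- The exit time `τ^U = inf {t ≥ 0 | X_{t-} ∉ U or X_t ∉ U}`. -/
def tauU (U : Set S) (x : Path S) : ℝ≥0∞ :=
  ⨅ t ∈ {t : ℝ | 0 ≤ t ∧
      ((0 < t ∧ ¬ ∃ a ∈ U, Tendsto x (𝓝[<] t) (𝓝 (a : OnePoint S))) ∨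
        ¬ ∃ a ∈ U, x t = (a : OnePoint S))},
    ENNReal.ofReal t

/-! ### The modulus `ω'` -/

/-- The modulus of continuity `ω'_{t,K,x}(δ)` of (2.5), with values in `[0,∞]`. -/
def omegaMod (ρ : S → S → ℝ) (t : ℝ) (K : Set S) (x : Path S) (δ : ℝ) : ℝ≥0∞ :=
  ⨅ (p : ℕ × (ℕ → ℝ)) (_ : p.2 0 = 0 ∧ (∀ i < p.1, p.2 i + δ < p.2 (i + 1)) ∧
      (∀ s : ℝ, 0 ≤ s → s < p.2 p.1 → x s ≠ OnePoint.infty) ∧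
      ¬ (p.2 p.1 ≤ t ∧ ∃ a ∈ K, x (p.2 p.1) = (a : OnePoint S))),
    ⨆ (i : ℕ) (_ : i < p.1) (s₁ : ℝ) (_ : p.2 i ≤ s₁ ∧ s₁ < p.2 (i + 1))
      (s₂ : ℝ) (_ : p.2 i ≤ s₂ ∧ s₂ < p.2 (i + 1)),
      ENNReal.ofReal (dd ρ (x s₁) (x s₂))

/-! ### Skorokhod pseudo-metrics -/

open Classical in
/-- The penalty term `d(x_{t₁}, K^c) ∧ (t - t₁)_+ 𝟙_{t₁ < ξ(x)}` appearing in the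
definition of the pseudo-metrics (with the convention `d(a, ∅) = +∞`). -/
noncomputable def pen (ρ : S → S → ℝ) (t : ℝ) (K : Set S) (x : Path S) (t₁ : ℝ) : ℝ :=
  Option.elim (show Option S from x t₁) 0 (fun a =>
    if (Kᶜ : Set S).Nonempty then min (sInf ((fun b => ρ a b) '' (Kᶜ : Set S))) (max (t - t₁) 0)
    else max (t - t₁) 0)

open Classical in
/-- The set of admissible bounds in the definition of `ρ̃_{t,K}` (`useLip = false`) and of
`ρ_{t,K}` (`useLip = true`). -/
def rhoSet (useLip : Bool) (ρ : S → S → ℝ) (t : ℝ) (K : Set S) (x y : Path S) : Set ℝ :=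
  {r : ℝ | 0 ≤ r ∧ ∃ t₁ t₂ : ℝ, ∃ l : ℝ → ℝ, 0 ≤ t₁ ∧ 0 ≤ t₂ ∧ l t₁ = t₂ ∧
    (if useLip then IsLipTimeBij l else IsTimeBij l) ∧
    (∀ s : ℝ, 0 ≤ s → s < t₁ → x s ≠ OnePoint.infty) ∧
    (∀ s : ℝ, 0 ≤ s → s < t₂ → y s ≠ OnePoint.infty) ∧
    (∀ s : ℝ, 0 ≤ s → s < t₁ → dd ρ (x s) (y (l s)) ≤ r) ∧
    IdDistLe l t₁ r ∧
    (useLip = true → LogSlopeLe l t₁ r) ∧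
    pen ρ t K x t₁ ≤ r ∧ pen ρ t K y t₂ ≤ r}

/-- The pseudo-metric `ρ̃_{t,K}`. -/
noncomputable def rhoTilde (ρ : S → S → ℝ) (t : ℝ) (K : Set S) (x y : Path S) : ℝ :=
  sInf (rhoSet false ρ t K x y)

/-- The pseudo-metric `ρ_{t,K}`. -/
noncomputable def rhoMet (ρ : S → S → ℝ) (t : ℝ) (K : Set S) (x y : Path S) : ℝ :=
  sInf (rhoSet true ρ t K x y)

/-! ### Time change -/

/-- `g ∈ C^{≠0}(S, ℝ₊)`: `{g = 0}` is closed and `g` is continuous on `{g ≠ 0}`. -/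
def Czero (g : S → ℝ) : Prop :=
  (∀ a : S, 0 ≤ g a) ∧ IsClosed {a : S | g a = 0} ∧ ContinuousOn g {a : S | g a ≠ 0}

/-- `g ∈ C̃^{≠0}(S, ℝ₊)`: moreover `g` is bounded on every compact subset of `S`. -/
def CzeroLocBdd (g : S → ℝ) : Prop :=
  Czero g ∧ ∀ K : Set S, IsCompact K → ∃ C : ℝ, ∀ a ∈ K, g a ≤ C

/-- `g` extended to `S^Δ` by the junk value `0` at `Δ`. -/
def gOP (g : S → ℝ) : OnePoint S → ℝ := fun a => Option.elim (show Option S from a) 0 g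

open Classical in
/-- The additive functional `A^g_t(x) = ∫_0^t du / g(x_u)` for `t ∈ [0, τ^{{g≠0}}(x)]`,
and `+∞` otherwise. -/
noncomputable def Ag (g : S → ℝ) (x : Path S) (t : ℝ) : ℝ≥0∞ :=
  if 0 ≤ t ∧ ENNReal.ofReal t ≤ tauU {a : S | g a ≠ 0} x then
    ∫⁻ u in Ioo (0:ℝ) t, (ENNReal.ofReal (gOP g (x u)))⁻¹
  else ⊤

/-- The time change `τ^g_t(x) = inf {s ≥ 0 | A^g_s(x) ≥ t}`, for `t ∈ [0,∞]`. -/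
noncomputable def taug (g : S → ℝ) (x : Path S) (t : ℝ≥0∞) : ℝ≥0∞ :=
  ⨅ s ∈ {s : ℝ | 0 ≤ s ∧ t ≤ Ag g x s}, ENNReal.ofReal s

/-- The total mass `A^g_{τ^g_∞(x)}(x) = ∫_0^{τ^{{g≠0}}(x)} du / g(x_u)`. -/
noncomputable def Atotal (g : S → ℝ) (x : Path S) : ℝ≥0∞ :=
  ∫⁻ u in {u : ℝ | 0 < u ∧ ENNReal.ofReal u ≤ tauU {a : S | g a ≠ 0} x},
    (ENNReal.ofReal (gOP g (x u)))⁻¹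

/-- The filter of times converging to `t ∈ [0,∞]` from the left. -/
noncomputable def leftFilter (t : ℝ≥0∞) : Filter ℝ := if t = ⊤ then atTop else 𝓝[<] t.toReal

open Classical in
/-- The left limit `x_{t-}` at a `[0,∞]`-valued time, junk value `Δ` if it does not exist. -/
noncomputable def leftLimValE (x : Path S) (t : ℝ≥0∞) : OnePoint S :=
  if h : ∃ a : OnePoint S, Tendsto x (leftFilter t) (𝓝 a) then h.choose else OnePoint.infty

open Classical in
/-- The time-changed path `g·x` of Definition 3.1.  -/
noncomputable def timeChange (g : S → ℝ) (x : Path S) : Path S := fun t =>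
  if 0 ≤ t ∧ Atotal g x ≤ ENNReal.ofReal t ∧
      ∃ a : S, g a = 0 ∧ Tendsto x (leftFilter (tauU {b : S | g b ≠ 0} x)) (𝓝 (a : OnePoint S))
  then leftLimValE x (tauU {b : S | g b ≠ 0} x)
  else evalE x (taug g x (ENNReal.ofReal t))

/-- The constant path equal to `Δ`. -/
def deadPath (S : Type*) [TopologicalSpace S] : Path S := fun _ => OnePoint.infty

lemma isDexp_deadPath : IsDexp (deadPath S) := by
  refine ⟨fun _ _ => rfl, fun _ _ _ _ => rfl, ?_, ?_, ?_⟩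
  · have : xiSet (deadPath S) = univ := by ext t; simp [xiSet, deadPath]
    rw [this]; exact isClosed_univ
  · intro t _ h; exact absurd rfl h
  · intro t _ h; exact absurd rfl h

lemma isDloc_deadPath : IsDloc (deadPath S) := by
  refine ⟨isDexp_deadPath, ?_⟩
  rintro ⟨-, hxi, -⟩
  exfalso
  have huniv : xiSet (deadPath S) = univ := by ext t; simp [xiSet, deadPath]
  have : xiR (deadPath S) = 0 := by
    rw [xiR, huniv]
    exact Real.sInf_of_not_bddBelow (by simp [not_bddBelow_univ (α := ℝ)])
  rw [this] at hxi; exact lt_irrefl 0 hxi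

lemma isCadlagDelta_deadPath : IsCadlagDelta (deadPath S) :=
  ⟨fun _ _ => rfl, fun _ _ => tendsto_const_nhds, fun _ _ => ⟨OnePoint.infty, tendsto_const_nhds⟩⟩

open Classical in
/-- Packaging of a raw path as an element of `𝔻_loc(S)` (junk value if it is not one). -/
noncomputable def toDloc (y : Path S) : DlocT S :=
  if h : IsDloc y then ⟨y, h⟩ else ⟨deadPath S, isDloc_deadPath⟩

open Classical in
/-- Packaging of a raw path as an element of `𝔻(S^Δ)` (junk value if it is not one). -/
noncomputable def toDDelta (y : Path S) : DDeltaT S :=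
  if h : IsCadlagDelta y then ⟨y, h⟩ else ⟨deadPath S, isCadlagDelta_deadPath⟩

/-- Condition defining the continuity set `B` of Theorem 3.3, for a pair `(g, x)`. -/
def BCond (g : S → ℝ) (x : Path S) : Prop :=
  (tauU {a : S | g a ≠ 0} x < xiE x →
    ∀ t : ℝ, tauU {a : S | g a ≠ 0} x < ENNReal.ofReal t →
      ∫⁻ u in Ioo (0:ℝ) t, (ENNReal.ofReal (gOP g (x u)))⁻¹ = ⊤) ∧
  (Atotal g x < ⊤ →
    ∀ a : S, tauU {a : S | g a ≠ 0} x ≠ ⊤ →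
      Tendsto x (𝓝[<] (tauU {a : S | g a ≠ 0} x).toReal) (𝓝 (a : OnePoint S)) →
      g a = 0 → x ((tauU {a : S | g a ≠ 0} x).toReal) = (a : OnePoint S))

/-- `x_{ξ(x)-}` exists in `U` whenever `0 < ξ(x) < ∞`. -/
def limExistsIn (U : Set S) (y : Path S) : Prop :=
  (explodes y ∧ 0 < xiR y) → ∃ a ∈ U, Tendsto y (𝓝[<] xiR y) (𝓝 (a : OnePoint S))

/-! ### Global Skorokhod convergence -/

/-- Convergence in the global Skorokhod topology of `𝔻(S)` (Corollary 2.7). -/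
def ConvGlob (ρ : S → S → ℝ) (xk : ℕ → Path S) (x : Path S) : Prop :=
  ∃ l : ℕ → ℝ → ℝ, (∀ k, IsLipTimeBij (l k)) ∧ ∀ t : ℝ, 0 ≤ t →
    (∀ ε > (0:ℝ), ∀ᶠ k in atTop, ∀ s : ℝ, 0 ≤ s → s ≤ t → dd ρ (x s) (xk k (l k s)) ≤ ε) ∧
    (∀ ε > (0:ℝ), ∀ᶠ k in atTop, LogSlopeLe (l k) t ε)

/-- Convergence in the global Skorokhod topology of `𝔻(S^Δ)`, written with entourages of the
(unique) uniformity of the compact space `S^Δ` (equivalently, with any compatible metric). -/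
def ConvGlobDelta (xk : ℕ → Path S) (x : Path S) : Prop :=
  ∃ l : ℕ → ℝ → ℝ, (∀ k, IsTimeBij (l k)) ∧ ∀ t : ℝ, 0 ≤ t →
    (∀ V ∈ 𝓝ˢ (Set.diagonal (OnePoint S)), ∀ᶠ k in atTop,
      ∀ s : ℝ, 0 ≤ s → s ≤ t → ((x s, xk k (l k s)) : OnePoint S × OnePoint S) ∈ V) ∧
    (∀ ε > (0:ℝ), ∀ᶠ k in atTop, IdDistLe (l k) t ε)

/-! ### Markov families -/

/-- The shifted path `(X_{t₀+t})_{t≥0}`, at a `[0,∞]`-valued time `t₀`. -/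
noncomputable def shiftE (x : Path S) (t₀ : ℝ≥0∞) : Path S := fun t =>
  if t₀ = ⊤ then OnePoint.infty else x (t₀.toReal + max t 0)

/-- Conditions a), b) in the definition of a Markov family (together with the
normalisation `P_Δ(ξ = 0) = 1`). -/
def MarkovBase {α : Type*} (ev : α → Path S)
    (P : OnePoint S → @Measure α (filtAll ev)) : Prop :=
  (∀ a : OnePoint S, @IsProbabilityMeasure α (filtAll ev) (P a)) ∧
  (∀ B : Set α, MeasurableSet[filtAll ev] B →
    @Measurable S ℝ≥0∞ (borel S) inferInstance (fun a : S => P (a : OnePoint S) B)) ∧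
  (∀ a : S, P (a : OnePoint S) {x | ev x 0 = (a : OnePoint S)} = 1) ∧
  (P OnePoint.infty {x | ev x 0 = OnePoint.infty} = 1)

/-- Condition c) in the definition of a `(𝓖_t)`-Markov family. -/
def MarkovProp {α : Type*} (ev : α → Path S) (G : ℝ → MeasurableSpace α)
    (P : OnePoint S → @Measure α (filtAll ev)) : Prop :=
  ∀ (a : OnePoint S) (t₀ : ℝ), 0 ≤ t₀ →
    ∀ B : Set (Path S), MeasurableSet[filtAll (id : Path S → Path S)] B →
      ∀ A : Set α, MeasurableSet[G t₀] A →
        P a (A ∩ {x | (fun t => ev x (t₀ + max t 0)) ∈ B}) =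
          ∫⁻ x in A, P (ev x t₀) {y | ev y ∈ B} ∂(P a)

/-- Condition c) for a `(𝓖_t)`-strong Markov family: the Markov property at every
`(𝓖_t)`-stopping time. -/
def StrongMarkovProp {α : Type*} (ev : α → Path S) (G : ℝ → MeasurableSpace α)
    (P : OnePoint S → @Measure α (filtAll ev)) : Prop :=
  ∀ (a : OnePoint S) (τ : α → ℝ≥0∞),
    (∀ t : ℝ, 0 ≤ t → MeasurableSet[G t] {x | τ x ≤ ENNReal.ofReal t}) →
    ∀ B : Set (Path S), MeasurableSet[filtAll (id : Path S → Path S)] B →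
      ∀ A : Set α, MeasurableSet[filtAll ev] A →
        (∀ t : ℝ, 0 ≤ t → MeasurableSet[G t] (A ∩ {x | τ x ≤ ENNReal.ofReal t})) →
        P a (A ∩ {x | shiftE (ev x) (τ x) ∈ B}) =
          ∫⁻ x in A, P (evalE (ev x) (τ x)) {y | ev y ∈ B} ∂(P a)

/-!
Right-continuity reduces everything to countably many times. Approximating a measurable time
from above by countably-valued ones exhibits `(x, t) ↦ x_t` as a pointwise limit of jointly
measurable maps into `S^Δ`, which is compact and metrizable. For `t > 0` the left limit `x_{t-}`
is the limit of `x_{n t / (n + 1)}`; its existence is a Cauchy condition for a compatible metric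
on `S^Δ`, which, again by right-continuity, only has to be tested at rational times in `[0, t)`,
hence is a countable combination of conditions on coordinates `X_r`, `r < t₀`.
-/

section OnePoint

variable {X : Type*} [TopologicalSpace X] [T2Space X] [LocallyCompactSpace X]
  [SecondCountableTopology X]

instance _root_.OnePoint.secondCountableTopology : SecondCountableTopology (OnePoint X) := by
  obtain ⟨b, hbc, -, hb⟩ := TopologicalSpace.exists_countable_basis X
  let K := CompactExhaustion.choice X
  let B : Set (Set (OnePoint X)) :=
    ((fun s : Set X => ((↑) '' s : Set (OnePoint X))) '' b) ∪
      range fun n => ((↑) '' K n : Set (OnePoint X))ᶜ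
  have hB_open : ∀ u ∈ B, IsOpen u := by
    rintro u (⟨s, hs, rfl⟩ | ⟨n, rfl⟩)
    · exact OnePoint.isOpen_image_coe.2 (hb.isOpen hs)
    · exact OnePoint.isOpen_compl_image_coe.2 ⟨(K.isCompact n).isClosed, K.isCompact n⟩
  refine (TopologicalSpace.isTopologicalBasis_of_isOpen_of_nhds hB_open fun a u hau hu => ?_)
    |>.secondCountableTopology ((hbc.image _).union (countable_range _))
  induction a using OnePoint.rec with
  | infty =>
    obtain ⟨n, hn⟩ := K.exists_superset_of_isCompact ((OnePoint.isOpen_iff_of_mem' hau).1 hu).1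
    refine ⟨((↑) '' K n)ᶜ, Or.inr ⟨n, rfl⟩, mem_compl OnePoint.infty_notMem_image_coe,
      fun z hz => ?_⟩
    induction z using OnePoint.rec with
    | infty => exact hau
    | coe y => exact not_not.1 fun hy => hz (mem_image_of_mem _ (hn hy))
  | coe x =>
    obtain ⟨s, hs, hxs, hsu⟩ :=
      hb.exists_subset_of_mem_open hau (hu.preimage OnePoint.continuous_coe)
    exact ⟨(↑) '' s, Or.inl ⟨s, hs, rfl⟩, mem_image_of_mem _ hxs,
      (image_mono hsu).trans (image_preimage_subset _ _)⟩

end OnePoint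

theorem _root_.Measurable.imp_of_exists {α : Type*} [MeasurableSpace α] {p q : α → Prop}
    (hp : Measurable p) (hq : (∃ a, p a) → Measurable q) : Measurable fun a => p a → q a := by
  by_cases h : ∃ a, p a
  · exact hp.imp (hq h)
  · simp [not_exists.1 h]

theorem _root_.measurable_comp_of_countable_range {α T ι β : Type*} [MeasurableSpace α]
    [MeasurableSpace T] [MeasurableSpace ι] [MeasurableSingletonClass ι] [MeasurableSpace β]
    {f : α → ι → β} {φ : T → ι} (hφ : Measurable φ) (hφc : (range φ).Countable)
    (hf : ∀ s ∈ range φ, Measurable (f · s)) :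
    Measurable fun p : α × T => f p.1 (φ p.2) := by
  have := hφc.to_subtype
  have hf' : Measurable fun p : α × range φ => f p.1 p.2 :=
    measurable_from_prod_countable_left fun s => hf s s.2
  have hφ' : Measurable fun p : α × T => (p.1, (⟨φ p.2, mem_range_self p.2⟩ : range φ)) :=
    measurable_fst.prodMk (hφ.subtype_mk.comp measurable_snd)
  exact hf'.comp hφ'

theorem _root_.le_ceil_mul_div (s : ℝ) {c : ℝ} (hc : 0 < c) : s ≤ ⌈s * c⌉ / c := by
  rw [le_div_iff₀ hc]
  exact Int.le_ceil _

theorem _root_.ceil_mul_div_le (s : ℝ) {c : ℝ} (hc : 0 < c) : ⌈s * c⌉ / c ≤ s + 1 / c := by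
  rw [div_le_iff₀ hc, add_mul, one_div_mul_cancel hc.ne']
  exact (Int.ceil_lt_add_one _).le

theorem _root_.tendsto_ceil_mul_div_nhdsGE (s : ℝ) :
    Tendsto (fun n : ℕ => (⌈s * (n + 1)⌉ : ℝ) / (n + 1)) atTop (𝓝[≥] s) := by
  have hpos : ∀ n : ℕ, (0 : ℝ) < n + 1 := fun n => n.cast_add_one_pos
  refine tendsto_nhdsWithin_iff.2
    ⟨?_, Eventually.of_forall fun n => le_ceil_mul_div s (hpos n)⟩
  refine tendsto_of_tendsto_of_tendsto_of_le_of_le tendsto_const_nhds ?_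
    (fun n => le_ceil_mul_div s (hpos n)) (fun n => ceil_mul_div_le s (hpos n))
  simpa using (tendsto_const_nhds (x := s)).add tendsto_one_div_add_atTop_nhds_zero_nat

theorem _root_.measurable_comp_of_continuousWithinAt_Ici {α T β : Type*} [MeasurableSpace α]
    [MeasurableSpace T] [TopologicalSpace β] [TopologicalSpace.PseudoMetrizableSpace β]
    [MeasurableSpace β] [BorelSpace β] {f : α → ℝ → β} {σ : T → ℝ} {a b : ℝ}
    (hσ : Measurable σ) (hσab : ∀ u, σ u ∈ Icc a b) (hf : ∀ s ∈ Icc a b, Measurable (f · s))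
    (hf_right : ∀ x, ∀ s ∈ Icc a b, ContinuousWithinAt (f x) (Ici s) s) :
    Measurable fun p : α × T => f p.1 (σ p.2) := by
  let g : ℕ → ℤ → ℝ := fun n k => min (k / (n + 1)) b
  let φ : ℕ → T → ℝ := fun n u => g n ⌈σ u * (n + 1)⌉
  have hφ_mem : ∀ n u, φ n u ∈ Icc (σ u) b := fun n u =>
    ⟨le_min (le_ceil_mul_div _ n.cast_add_one_pos) (hσab u).2, min_le_right _ _⟩
  have hφ_meas : ∀ n, Measurable (φ n) := fun n =>
    (measurable_from_top (f := g n)).comp (Int.measurable_ceil.comp (hσ.mul_const _))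
  have hφ_range : ∀ n, (range (φ n)).Countable := fun n =>
    (countable_range (g n)).mono (range_comp_subset_range (fun u => ⌈σ u * (n + 1)⌉) (g n))
  have hφ_lim : ∀ u, Tendsto (φ · u) atTop (𝓝[≥] σ u) := fun u => by
    refine tendsto_nhdsWithin_iff.2 ⟨?_, Eventually.of_forall fun n => (hφ_mem n u).1⟩
    have h := ((tendsto_ceil_mul_div_nhdsGE (σ u)).mono_right nhdsWithin_le_nhds).min
      (tendsto_const_nhds (x := b))
    rwa [min_eq_left (hσab u).2] at h
  have hf_range : ∀ n, ∀ s ∈ range (φ n), Measurable (f · s) := by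
    rintro n _ ⟨u, rfl⟩
    exact hf _ ⟨(hσab u).1.trans (hφ_mem n u).1, (hφ_mem n u).2⟩
  refine measurable_of_tendsto_metrizable
    (fun n => measurable_comp_of_countable_range (hφ_meas n) (hφ_range n) (hf_range n))
    (tendsto_pi_nhds.2 fun p => ?_)
  exact (hf_right p.1 _ (hσab p.2)).tendsto.comp (hφ_lim p.2)

theorem _root_.IsClosed.mem_of_continuousWithinAt_Ici_of_forall_rat {β : Type*}
    [TopologicalSpace β] {C : Set β} (hC : IsClosed C) {f : ℝ → β} {s b : ℝ} (hsb : s < b)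
    (hf : ContinuousWithinAt f (Ici s) s) (h : ∀ r : ℚ, (r : ℝ) ∈ Ioo s b → f r ∈ C) :
    f s ∈ C := by
  have hs : s ∈ closure (Ioo s b ∩ range ((↑) : ℚ → ℝ)) :=
    closure_minimal (Rat.denseRange_cast.open_subset_closure_inter isOpen_Ioo) isClosed_closure
      (by rw [closure_Ioo hsb.ne]; exact left_mem_Icc.2 hsb.le)
  have := mem_closure_iff_nhdsWithin_neBot.1 hs
  have hsub : Ioo s b ∩ range ((↑) : ℚ → ℝ) ⊆ Ici s := fun _ hr => hr.1.1.le
  refine hC.mem_of_tendsto (hf.mono hsub).tendsto (eventually_nhdsWithin_of_forall ?_)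
  rintro _ ⟨hr, r, rfl⟩
  exact h r hr

theorem _root_.dist_le_on_Ioo_of_forall_rat {β : Type*} [PseudoMetricSpace β] {f : ℝ → β}
    {q t ε : ℝ} (hf : ∀ s ∈ Ioo q t, ContinuousWithinAt f (Ici s) s)
    (h : ∀ r₁ r₂ : ℚ, (r₁ : ℝ) ∈ Ioo q t → (r₂ : ℝ) ∈ Ioo q t → dist (f r₁) (f r₂) ≤ ε) :
    ∀ s₁ ∈ Ioo q t, ∀ s₂ ∈ Ioo q t, dist (f s₁) (f s₂) ≤ ε := by
  have hrat : ∀ s₁ ∈ Ioo q t, ∀ r : ℚ, (r : ℝ) ∈ Ioo q t → dist (f s₁) (f r) ≤ ε :=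
    fun s₁ hs₁ r hr =>
      Metric.isClosed_closedBall.mem_of_continuousWithinAt_Ici_of_forall_rat hs₁.2 (hf s₁ hs₁)
        fun r₁ hr₁ => h r₁ r ⟨hs₁.1.trans hr₁.1, hr₁.2⟩ hr
  intro s₁ hs₁ s₂ hs₂
  rw [dist_comm]
  refine Metric.isClosed_closedBall.mem_of_continuousWithinAt_Ici_of_forall_rat hs₂.2
    (hf s₂ hs₂) fun r hr => ?_
  rw [Metric.mem_closedBall, dist_comm]
  exact hrat s₁ hs₁ r ⟨hs₂.1.trans hr.1, hr.2⟩

theorem _root_.exists_tendsto_nhdsLT_iff_forall_rat {β : Type*} [PseudoMetricSpace β]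
    [CompleteSpace β] {f : ℝ → β} {a t : ℝ} (hat : a < t)
    (hf : ∀ s ∈ Ico a t, ContinuousWithinAt f (Ici s) s) :
    (∃ b, Tendsto f (𝓝[<] t) (𝓝 b)) ↔
      ∀ n : ℕ, ∃ q : ℚ, (q : ℝ) ∈ Ico a t ∧ ∀ r₁ r₂ : ℚ, (r₁ : ℝ) ∈ Ioo (q : ℝ) t →
        (r₂ : ℝ) ∈ Ioo (q : ℝ) t → dist (f r₁) (f r₂) ≤ 1 / (n + 1) := by
  rw [← cauchy_map_iff_exists_tendsto, Metric.cauchy_iff]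
  constructor
  · rintro ⟨-, h⟩ n
    obtain ⟨U, hU, hUn⟩ := h (1 / (n + 1)) n.one_div_pos_of_nat
    obtain ⟨l, hl, hlU⟩ := mem_nhdsLT_iff_exists_Ioo_subset.1 (mem_map.1 hU)
    obtain ⟨q, hq, hqt⟩ := exists_rat_btwn (max_lt hl hat)
    refine ⟨q, ⟨(le_max_right _ _).trans hq.le, hqt⟩, fun r₁ r₂ hr₁ hr₂ => ?_⟩
    have hlq : l < q := (le_max_left _ _).trans_lt hq
    exact (hUn _ (hlU ⟨hlq.trans hr₁.1, hr₁.2⟩) _ (hlU ⟨hlq.trans hr₂.1, hr₂.2⟩)).le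
  · intro h
    refine ⟨map_neBot, fun ε hε => ?_⟩
    obtain ⟨n, hn⟩ := exists_nat_one_div_lt hε
    obtain ⟨q, hq, hqr⟩ := h n
    have hreal := dist_le_on_Ioo_of_forall_rat
      (fun s hs => hf s ⟨hq.1.trans hs.1.le, hs.2⟩) hqr
    refine ⟨f '' Ioo (q : ℝ) t, image_mem_map (Ioo_mem_nhdsLT hq.2), ?_⟩
    rintro _ ⟨s₁, hs₁, rfl⟩ _ ⟨s₂, hs₂, rfl⟩
    exact (hreal s₁ hs₁ s₂ hs₂).trans_lt hn

theorem _root_.natCast_div_add_one_mul_lt {t : ℝ} (ht : 0 < t) (n : ℕ) :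
    (n / (n + 1) : ℝ) * t < t :=
  mul_lt_of_lt_one_left ht ((div_lt_one n.cast_add_one_pos).2 (lt_add_one _))

theorem _root_.tendsto_natCast_div_add_one_mul_nhdsLT {t : ℝ} (ht : 0 < t) :
    Tendsto (fun n : ℕ => (n / (n + 1) : ℝ) * t) atTop (𝓝[<] t) := by
  refine tendsto_nhdsWithin_iff.2 ⟨?_, Eventually.of_forall (natCast_div_add_one_mul_lt ht)⟩
  simpa using (tendsto_natCast_div_add_atTop (1 : ℝ)).mul_const t

section

theorem IsDexp.continuousWithinAt_Ici {x : Path S} (hx : IsDexp x) {s : ℝ} (hs : 0 ≤ s) :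
    ContinuousWithinAt x (Ici s) s := by
  rw [ContinuousWithinAt, ← Ioi_insert, nhdsWithin_insert]
  refine tendsto_sup.2 ⟨tendsto_pure_nhds x s, ?_⟩
  by_cases hΔ : x s = OnePoint.infty
  · rw [hΔ]
    exact tendsto_const_nhds.congr' (eventually_nhdsWithin_of_forall fun u hu =>
      (hx.2.1 (le_of_lt hu) hΔ).symm)
  · exact hx.2.2.2.1 s hs hΔ

theorem tendsto_leftLimVal {x : Path S} {t : ℝ} (h : ∃ a, Tendsto x (𝓝[<] t) (𝓝 a)) :
    Tendsto x (𝓝[<] t) (𝓝 (leftLimVal x t)) := by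
  rw [leftLimVal, dif_pos h]
  exact h.choose_spec

variable {α : Type*} {ev : α → Path S} {s t : ℝ}

theorem measurable_coord_filt (hs : s ∈ Icc 0 t) : Measurable[filt ev t, msOP S] (ev · s) :=
  Measurable.of_comap_le (le_iSup₂ (f := fun s (_ : s ∈ Icc 0 t) =>
    MeasurableSpace.comap (ev · s) (msOP S)) s hs)

theorem measurable_coord_filtLt (hs : s ∈ Ico 0 t) : Measurable[filtLt ev t, msOP S] (ev · s) :=
  Measurable.of_comap_le (le_iSup₂ (f := fun s (_ : s ∈ Ico 0 t) =>
    MeasurableSpace.comap (ev · s) (msOP S)) s hs)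

end

section

variable [T2Space S] [LocallyCompactSpace S] [SecondCountableTopology S]
  [MeasurableSpace (DexpT S)]

attribute [local instance] msOP

instance : BorelSpace (OnePoint S) := ⟨rfl⟩

theorem measurable_eval_comp {T : Type*} [MeasurableSpace T] {σ : T → ℝ} {b : ℝ}
    (hσ : Measurable σ) (hσb : ∀ u, σ u ∈ Icc 0 b)
    (hcoord : ∀ s ∈ Icc 0 b, Measurable fun x : DexpT S => x.1 s) :
    Measurable fun p : DexpT S × T => p.1.1 (σ p.2) :=
  measurable_comp_of_continuousWithinAt_Ici hσ hσb hcoord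
    fun x _ hs => x.2.continuousWithinAt_Ici hs.1

theorem measurableSet_exists_tendsto_nhdsLT {t₀ : ℝ}
    (hcoord : ∀ s ∈ Ico 0 t₀, Measurable fun x : DexpT S => x.1 s) :
    MeasurableSet
      {p : DexpT S × Ioc (0 : ℝ) t₀ | ∃ a, Tendsto p.1.1 (𝓝[<] (p.2 : ℝ)) (𝓝 a)} := by
  let _ := TopologicalSpace.metrizableSpaceMetric (OnePoint S)
  have hbefore : ∀ c : ℝ, Measurable fun p : DexpT S × Ioc (0 : ℝ) t₀ => c < p.2 := fun c =>
    measurableSet_setOfPred.1 (measurableSet_lt measurable_const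
      (measurable_subtype_coe.comp measurable_snd))
  have hmeas : MeasurableSet {p : DexpT S × Ioc (0 : ℝ) t₀ | ∀ n : ℕ, ∃ q : ℚ,
      (q : ℝ) ∈ Ico 0 (p.2 : ℝ) ∧ ∀ r₁ r₂ : ℚ, (r₁ : ℝ) ∈ Ioo (q : ℝ) p.2 →
        (r₂ : ℝ) ∈ Ioo (q : ℝ) p.2 → dist (p.1.1 r₁) (p.1.1 r₂) ≤ 1 / (n + 1)} := by
    rw [measurableSet_setOfPred]
    refine Measurable.forall fun n => Measurable.exists fun q => ?_
    by_cases hq : (0 : ℝ) ≤ q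
    swap
    · simp only [mem_Ico, hq, false_and]
      exact measurable_const
    have hq_mem : Measurable fun p : DexpT S × Ioc (0 : ℝ) t₀ => (q : ℝ) ∈ Ico 0 (p.2 : ℝ) := by
      simpa [hq] using hbefore q
    refine hq_mem.and (Measurable.forall fun r₁ => Measurable.forall fun r₂ => ?_)
    refine Measurable.imp_of_exists (measurable_const.and (hbefore r₁)) fun ⟨p₁, hp₁⟩ =>
      Measurable.imp_of_exists (measurable_const.and (hbefore r₂)) fun ⟨p₂, hp₂⟩ => ?_
    have hr₁ : (r₁ : ℝ) ∈ Ico 0 t₀ := ⟨hq.trans hp₁.1.le, hp₁.2.trans_le p₁.2.2.2⟩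
    have hr₂ : (r₂ : ℝ) ∈ Ico 0 t₀ := ⟨hq.trans hp₂.1.le, hp₂.2.trans_le p₂.2.2.2⟩
    exact measurableSet_setOfPred.1 (measurableSet_le
      (((hcoord _ hr₁).dist (hcoord _ hr₂)).comp measurable_fst) measurable_const)
  have hcrit : {p : DexpT S × Ioc (0 : ℝ) t₀ | ∃ a, Tendsto p.1.1 (𝓝[<] (p.2 : ℝ)) (𝓝 a)} =
      {p | ∀ n : ℕ, ∃ q : ℚ, (q : ℝ) ∈ Ico 0 (p.2 : ℝ) ∧ ∀ r₁ r₂ : ℚ,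
        (r₁ : ℝ) ∈ Ioo (q : ℝ) p.2 → (r₂ : ℝ) ∈ Ioo (q : ℝ) p.2 →
          dist (p.1.1 r₁) (p.1.1 r₂) ≤ 1 / (n + 1)} := by
    ext p
    exact exists_tendsto_nhdsLT_iff_forall_rat p.2.2.1
      fun s hs => p.1.2.continuousWithinAt_Ici hs.1
  exact hcrit ▸ hmeas

theorem measurable_leftLimVal {t₀ : ℝ} (ht₀ : 0 < t₀)
    (hcoord : ∀ s ∈ Ico 0 t₀, Measurable fun x : DexpT S => x.1 s) :
    Measurable fun q : {p : DexpT S × Ioc (0 : ℝ) t₀ //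
      ∃ a, Tendsto p.1.1 (𝓝[<] (p.2 : ℝ)) (𝓝 a)} => leftLimVal q.1.1.1 q.1.2 := by
  have happrox : ∀ n : ℕ, Measurable fun p : DexpT S × Ioc (0 : ℝ) t₀ =>
      p.1.1 ((n / (n + 1) : ℝ) * p.2) := fun n =>
    measurable_eval_comp (measurable_const.mul measurable_subtype_coe)
      (fun u => ⟨mul_nonneg (by positivity) u.2.1.le,
        mul_le_mul_of_nonneg_left u.2.2 (by positivity)⟩)
      fun s hs => hcoord s ⟨hs.1, hs.2.trans_lt (natCast_div_add_one_mul_lt ht₀ n)⟩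
  exact measurable_of_tendsto_metrizable (fun n => (happrox n).comp measurable_subtype_coe)
    (tendsto_pi_nhds.2 fun q =>
      (tendsto_leftLimVal q.2).comp (tendsto_natCast_div_add_one_mul_nhdsLT q.1.2.2.1))

end

theorem evaluation_and_left_limit_measurable_general
    {S : Type*} [MetricSpace S] [SecondCountableTopology S] [LocallyCompactSpace S]
    (t₀ : ℝ) :
    @Measurable (DexpT S × Icc (0:ℝ) t₀) (OnePoint S)
      (MeasurableSpace.prod (filt (Subtype.val : DexpT S → Path S) t₀)
        (MeasurableSpace.comap (Subtype.val : Icc (0:ℝ) t₀ → ℝ) inferInstance))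
      (msOP S) (fun p => p.1.1 (p.2 : ℝ)) ∧
    (0 < t₀ →
      MeasurableSet[MeasurableSpace.prod (filtLt (Subtype.val : DexpT S → Path S) t₀)
          (MeasurableSpace.comap (Subtype.val : Ioc (0:ℝ) t₀ → ℝ) inferInstance)]
        {p : DexpT S × Ioc (0:ℝ) t₀ |
          ∃ a : OnePoint S, Tendsto p.1.1 (𝓝[<] (p.2 : ℝ)) (𝓝 a)} ∧
      @Measurable
        {p : DexpT S × Ioc (0:ℝ) t₀ // ∃ a : OnePoint S, Tendsto p.1.1 (𝓝[<] (p.2 : ℝ)) (𝓝 a)}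
        (OnePoint S)
        (MeasurableSpace.comap Subtype.val
          (MeasurableSpace.prod (filtLt (Subtype.val : DexpT S → Path S) t₀)
            (MeasurableSpace.comap (Subtype.val : Ioc (0:ℝ) t₀ → ℝ) inferInstance)))
        (msOP S) (fun q => leftLimVal q.1.1.1 (q.1.2 : ℝ))) := by
  refine ⟨?_, fun ht₀ => ?_⟩
  · let _ : MeasurableSpace (DexpT S) := filt Subtype.val t₀
    exact measurable_eval_comp measurable_subtype_coe (fun u => u.2)
      fun _ => measurable_coord_filt
  · let _ : MeasurableSpace (DexpT S) := filtLt Subtype.val t₀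
    exact ⟨measurableSet_exists_tendsto_nhdsLT fun _ => measurable_coord_filtLt,
      measurable_leftLimVal ht₀ fun _ => measurable_coord_filtLt⟩

/-- Proposition 2.2, first two parts. Let `t₀ ∈ ℝ₊`. The evaluation map
`(x, t) ↦ x_t` from `𝔻_exp(S) × [0, t₀]` to `S^Δ` is `𝓕_{t₀} ⊗ ℬ([0,t₀])`-measurable.
Moreover, for `t₀ > 0`, the set `A` of pairs `(x, t) ∈ 𝔻_exp(S) × (0, t₀]` such that the left
limit `x_{t-}` exists in `S^Δ` belongs to `𝓕_{t₀-} ⊗ ℬ((0,t₀])`, and the map `(x,t) ↦ x_{t-}`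
from `A` to `S^Δ` is `𝓕_{t₀-} ⊗ ℬ((0,t₀])`-measurable. -/
theorem evaluation_and_left_limit_measurable
    {S : Type*} [MetricSpace S] [SecondCountableTopology S] [LocallyCompactSpace S]
    (t₀ : ℝ) (ht₀ : 0 ≤ t₀) :
    @Measurable (DexpT S × Icc (0:ℝ) t₀) (OnePoint S)
      (MeasurableSpace.prod (filt (Subtype.val : DexpT S → Path S) t₀)
        (MeasurableSpace.comap (Subtype.val : Icc (0:ℝ) t₀ → ℝ) inferInstance))
      (msOP S) (fun p => p.1.1 (p.2 : ℝ)) ∧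
    (0 < t₀ →
      MeasurableSet[MeasurableSpace.prod (filtLt (Subtype.val : DexpT S → Path S) t₀)
          (MeasurableSpace.comap (Subtype.val : Ioc (0:ℝ) t₀ → ℝ) inferInstance)]
        {p : DexpT S × Ioc (0:ℝ) t₀ |
          ∃ a : OnePoint S, Tendsto p.1.1 (𝓝[<] (p.2 : ℝ)) (𝓝 a)} ∧
      @Measurable
        {p : DexpT S × Ioc (0:ℝ) t₀ // ∃ a : OnePoint S, Tendsto p.1.1 (𝓝[<] (p.2 : ℝ)) (𝓝 a)}
        (OnePoint S)
        (MeasurableSpace.comap Subtype.val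
          (MeasurableSpace.prod (filtLt (Subtype.val : DexpT S → Path S) t₀)
            (MeasurableSpace.comap (Subtype.val : Ioc (0:ℝ) t₀ → ℝ) inferInstance)))
        (msOP S) (fun q => leftLimVal q.1.1.1 (q.1.2 : ℝ))) :=
  evaluation_and_left_limit_measurable_general t₀

end LocSkor
end
end

section
/- Let τ₀ be an (F_t)-stopping time on D_exp(S), let 𝒰 be an open subset of S², let h ∈ C(𝒰, ℝ₊) be continuous, and let M : D_exp(S) → [0,∞] be F_{τ₀}-measurable. Then τ := inf{ t ≥ τ₀ : {(X_{τ₀}, X_s)}_{τ₀ ≤ s ≤ t} is not relatively compact in 𝒰, or ∫_{τ₀}^t h(X_{τ₀}, X_s) ds ≥ M } is an (F_t)-stopping time. In particular the explosion time ξ is an (F_t)-stopping time, and for every open U ⊆ S, τ^U := inf{ t ≥ 0 : X_{t−} ∉ U or X_t ∉ U } ≤ ξ is an (F_t)-stopping time. -/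
open Filter Topology Set MeasureTheory
open scoped ENNReal NNReal

noncomputable section

namespace LocSkor

variable {S : Type*} [TopologicalSpace S]

variable {S : Type*} [MetricSpace S] [SecondCountableTopology S] [LocallyCompactSpace S]

/-- `h` extended to `S^Δ × S^Δ` by the junk value `0`. -/
noncomputable def hOP (h : S × S → ℝ) : OnePoint S → OnePoint S → ℝ :=
  fun a b => Option.elim (show Option S from a) 0
    (fun a' => Option.elim (show Option S from b) 0 (fun b' => h (a', b')))

/-- The family of pairs `{(X_{τ₀}, X_s)}_{τ₀ ≤ s ≤ t}`, as a subset of `S × S`. -/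
def pairSet (τ₀ : DexpT S → ℝ≥0∞) (x : DexpT S) (t : ℝ) : Set (S × S) :=
  {p : S × S | evalE x.1 (τ₀ x) = (p.1 : OnePoint S) ∧
    ∃ s : ℝ, (τ₀ x).toReal ≤ s ∧ s ≤ t ∧ x.1 s = (p.2 : OnePoint S)}

/-- `{(X_{τ₀}, X_s)}_{τ₀ ≤ s ≤ t}` is compactly embedded in `𝒰`. -/
def pairOK (𝒰 : Set (S × S)) (τ₀ : DexpT S → ℝ≥0∞) (x : DexpT S) (t : ℝ) : Prop :=
  evalE x.1 (τ₀ x) ≠ OnePoint.infty ∧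
  (∀ s : ℝ, (τ₀ x).toReal ≤ s → s ≤ t → x.1 s ≠ OnePoint.infty) ∧
  IsCompact (closure (pairSet τ₀ x t)) ∧ closure (pairSet τ₀ x t) ⊆ 𝒰

/-- The integral `∫_{τ₀}^t h(X_{τ₀}, X_s) ds`. -/
noncomputable def hInt (h : S × S → ℝ) (τ₀ : DexpT S → ℝ≥0∞) (x : DexpT S) (t : ℝ) : ℝ≥0∞ :=
  ∫⁻ s in Ioc ((τ₀ x).toReal) t, ENNReal.ofReal (hOP h (evalE x.1 (τ₀ x)) (x.1 s))

/-- The random time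
`τ = inf {t ≥ τ₀ | {(X_{τ₀}, X_s)}_{τ₀ ≤ s ≤ t} ⋐̸ 𝒰 or ∫_{τ₀}^t h(X_{τ₀}, X_s) ds ≥ M}`. -/
noncomputable def tauHit (𝒰 : Set (S × S)) (h : S × S → ℝ) (τ₀ : DexpT S → ℝ≥0∞)
    (M : DexpT S → ℝ≥0∞) (x : DexpT S) : ℝ≥0∞ :=
  ⨅ t ∈ {t : ℝ | 0 ≤ t ∧ τ₀ x ≤ ENNReal.ofReal t ∧
      (¬ pairOK 𝒰 τ₀ x t ∨ M x ≤ hInt h τ₀ x t)}, ENNReal.ofReal t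

/-!
The infimum defining `τ` is attained. If at time `t ≥ τ₀` the pairs `(X_{τ₀}, X_s)`, `s ≤ t`, stay
in a compact subset of `𝒰` and `∫_{τ₀}^t h < M`, then by right-continuity a compact neighbourhood
of `(X_{τ₀}, X_t)` in `𝒰` absorbs the path a little longer, `h` is bounded there, and both
conditions persist just after `t`. Hence `{τ ≤ t}` is `{τ₀ ≤ t}` intersected with the event that the
conditions fail at `t` itself. On `{τ₀ ≤ t}` this event is `𝓕_t`-measurable: relative compactness
is tested at rational times against a compact exhaustion of `𝒰` (right-continuity again), and the
integral is measurable because `(ω, s) ↦ X_s(ω)` is jointly measurable on `[0, t]`, as the limit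
of its values at dyadic times from above. The explosion time and the exit times `τ^U` are handled
in the same way.
-/

section Topology

variable {X : Type*} [TopologicalSpace X]

instance [T2Space X] [SecondCountableTopology X] [LocallyCompactSpace X] :
    SecondCountableTopology (OnePoint X) := by
  obtain ⟨B, hBc, -, hBb⟩ := TopologicalSpace.exists_countable_basis X
  let K := CompactExhaustion.choice X
  let C : Set (Set (OnePoint X)) :=
    ((fun s => (OnePoint.some '' s)) '' B) ∪ (range fun n => (OnePoint.some '' (K n : Set X))ᶜ)
  refine ⟨⟨C, (hBc.image _).union (countable_range _), ?_⟩⟩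
  refine (TopologicalSpace.isTopologicalBasis_of_isOpen_of_nhds ?_ ?_).eq_generateFrom
  · rintro s (⟨b, hb, rfl⟩ | ⟨n, rfl⟩)
    · exact OnePoint.isOpen_image_coe.2 (hBb.isOpen hb)
    · exact OnePoint.isOpen_compl_image_coe.2 ⟨(K.isCompact n).isClosed, K.isCompact n⟩
  · rintro (⟨⟩ | a) u hu huo
    · obtain ⟨n, hn⟩ := K.exists_superset_of_isCompact ((OnePoint.isOpen_iff_of_mem hu).1 huo).2
      refine ⟨(OnePoint.some '' (K n : Set X))ᶜ, Or.inr ⟨n, rfl⟩, ?_, ?_⟩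
      · exact fun ⟨y, _, h⟩ => OnePoint.coe_ne_infty y h
      · rintro (⟨⟩ | y) hy
        · exact hu
        · by_contra h
          exact hy ⟨y, hn h, rfl⟩
    · obtain ⟨b, hb, hab, hbu⟩ := hBb.exists_subset_of_mem_open
        (show a ∈ OnePoint.some ⁻¹' u from hu) (huo.preimage OnePoint.continuous_coe)
      exact ⟨OnePoint.some '' b, Or.inl ⟨b, hb, rfl⟩, ⟨a, hab, rfl⟩, image_subset_iff.2 hbu⟩

theorem _root_.IsOpen.exists_relCompact_exhaustion [T2Space X] [SecondCountableTopology X]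
    [LocallyCompactSpace X] {V : Set X} (hV : IsOpen V) :
    ∃ W : ℕ → Set X, (∀ m, IsOpen (W m)) ∧ (∀ m, IsCompact (closure (W m))) ∧
      (∀ m, closure (W m) ⊆ V) ∧ ∀ L : Set X, IsCompact L → L ⊆ V → ∃ m, L ⊆ W m := by
  have := hV.locallyCompactSpace
  let K := CompactExhaustion.choice V
  have hKc : ∀ m, IsCompact (Subtype.val '' (K (m + 1) : Set V)) :=
    fun m => (K.isCompact (m + 1)).image continuous_subtype_val
  have hcl : ∀ m, closure (Subtype.val '' interior (K (m + 1))) ⊆ Subtype.val '' (K (m + 1)) :=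
    fun m => closure_minimal (image_mono interior_subset) (hKc m).isClosed
  refine ⟨fun m => Subtype.val '' interior (K (m + 1)),
    fun m => hV.isOpenEmbedding_subtypeVal.isOpenMap _ isOpen_interior,
    fun m => (hKc m).of_isClosed_subset isClosed_closure (hcl m),
    fun m => (hcl m).trans (image_subset_iff.2 fun a _ => a.2), fun L hL hLV => ?_⟩
  have hL' : IsCompact ((Subtype.val : V → X) ⁻¹' L) := by
    rwa [Topology.IsEmbedding.subtypeVal.isCompact_iff, Subtype.image_preimage_coe,
      inter_eq_self_of_subset_right hLV]
  obtain ⟨m, hm⟩ := K.exists_superset_of_isCompact hL'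
  exact ⟨m, fun a ha => ⟨⟨a, hLV ha⟩, K.subset_interior_succ m (hm ha), rfl⟩⟩

theorem _root_.IsCompact.exists_isCompact_forall_mem_image {Y Z : Type*} [TopologicalSpace Z]
    {s : Set X} (hs : IsCompact s) {f : X → Y} {ι : Z → Y} {U : Set Z}
    (hloc : ∀ a ∈ s, ∃ K, IsCompact K ∧ K ⊆ U ∧ ∀ᶠ b in 𝓝[s] a, f b ∈ ι '' K) :
    ∃ K, IsCompact K ∧ K ⊆ U ∧ ∀ a ∈ s, f a ∈ ι '' K := by
  refine hs.induction_on (p := fun A => ∃ K, IsCompact K ∧ K ⊆ U ∧ ∀ a ∈ A, f a ∈ ι '' K)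
    ⟨∅, isCompact_empty, empty_subset U, fun _ h => h.elim⟩
    (fun _ _ hAB ⟨K, hK, hKU, hB⟩ => ⟨K, hK, hKU, fun a ha => hB a (hAB ha)⟩)
    (fun _ _ ⟨K, hK, hKU, hA⟩ ⟨L, hL, hLU, hB⟩ => ⟨K ∪ L, hK.union hL, union_subset hKU hLU,
      fun a ha => ha.elim (fun h => image_mono subset_union_left (hA a h))
        (fun h => image_mono subset_union_right (hB a h))⟩)
    fun a ha => ?_
  obtain ⟨K, hK, hKU, hev⟩ := hloc a ha
  exact ⟨{b | f b ∈ ι '' K}, hev, K, hK, hKU, fun _ hb => hb⟩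

theorem _root_.ContinuousOn.measurable_indicator [MeasurableSpace X] [OpensMeasurableSpace X]
    {s : Set X} {f : X → ℝ} (hf : ContinuousOn f s) (hs : IsOpen s) :
    Measurable (s.indicator f) := by
  classical
  rw [← piecewise_eq_indicator]
  exact hf.measurable_piecewise continuousOn_const hs.measurableSet

end Topology

theorem iInf_ofReal_le_ofReal_iff {A : Set ℝ} {t : ℝ} (ht : 0 ≤ t)
    (hgap : (∀ s ∈ A, t < s) → ∀ᶠ s in 𝓝[>] t, s ∉ A) :
    ⨅ s ∈ A, ENNReal.ofReal s ≤ ENNReal.ofReal t ↔ ∃ s ∈ A, s ≤ t := by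
  refine ⟨fun hle => ?_, fun ⟨s, hs, hst⟩ => iInf₂_le_of_le s hs (ENNReal.ofReal_le_ofReal hst)⟩
  by_contra! hA
  obtain ⟨δ, htδ, hδ⟩ := mem_nhdsGT_iff_exists_Ioo_subset.1 (hgap hA)
  have hδA : ∀ s ∈ A, δ ≤ s := fun s hs => not_lt.1 fun hsδ => hδ ⟨hA s hs, hsδ⟩ hs
  have : ENNReal.ofReal δ ≤ ENNReal.ofReal t :=
    (le_iInf₂ fun s hs => ENNReal.ofReal_le_ofReal (hδA s hs)).trans hle
  exact absurd ((ENNReal.ofReal_le_ofReal_iff ht).1 this) (not_le.2 htδ)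

theorem measurableSet_le_inter {α : Type*} {m : MeasurableSpace α} {M H : α → ℝ≥0∞}
    {T : Set α} (hH : Measurable H) (hM : ∀ c, MeasurableSet ({x | M x ≤ c} ∩ T)) :
    MeasurableSet ({x | M x ≤ H x} ∩ T) := by
  have hT : MeasurableSet T := by simpa using hM ⊤
  have hset : {x | M x ≤ H x} ∩ T = T \ ⋃ q : ℚ,
      {x | H x < ENNReal.ofReal q} ∩ (T \ ({x | M x ≤ ENNReal.ofReal q} ∩ T)) := by
    ext x
    constructor
    · rintro ⟨hx, hxT⟩
      refine ⟨hxT, fun hq => ?_⟩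
      obtain ⟨q, hHq, -, hMq⟩ := mem_iUnion.1 hq
      exact hMq ⟨show M x ≤ _ from (show M x ≤ H x from hx).trans hHq.le, hxT⟩
    · rintro ⟨hxT, hx⟩
      refine ⟨show M x ≤ H x from not_lt.1 fun hlt => hx ?_, hxT⟩
      obtain ⟨q, -, hHq, hqM⟩ := ENNReal.lt_iff_exists_rat_btwn.1 hlt
      exact mem_iUnion.2 ⟨q, hHq, hxT, fun h => not_le.2 hqM h.1⟩
  rw [hset]
  exact hT.diff (.iUnion fun q => (measurableSet_lt hH measurable_const).inter (hT.diff (hM _)))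

theorem toReal_min_ofReal_mem_Icc (τ : ℝ≥0∞) {t : ℝ} (ht : 0 ≤ t) :
    (min τ (ENNReal.ofReal t)).toReal ∈ Icc 0 t :=
  ⟨ENNReal.toReal_nonneg, ENNReal.toReal_le_of_le_ofReal ht (min_le_right _ _)⟩

def sampleTimes (t : ℝ) : Set ℝ := insert t (Icc 0 t ∩ range ((↑) : ℚ → ℝ))

theorem countable_sampleTimes (t : ℝ) : (sampleTimes t).Countable :=
  ((countable_range _).mono inter_subset_right).insert t

theorem sampleTimes_subset {t : ℝ} (ht : 0 ≤ t) : sampleTimes t ⊆ Icc 0 t := by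
  rintro r (rfl | ⟨hr, -⟩)
  exacts [⟨ht, le_rfl⟩, hr]

theorem le_of_mem_sampleTimes {r t : ℝ} (hr : r ∈ sampleTimes t) : r ≤ t := by
  rcases hr with rfl | ⟨hr, -⟩
  exacts [le_rfl, hr.2]

theorem mem_of_forall_sampleTimes {Z : Type*} [TopologicalSpace Z] {f : ℝ → Z} {A : Set Z}
    (hA : IsClosed A) {a t : ℝ} (ha : 0 ≤ a)
    (hf : ∀ s ∈ Ico a t, ContinuousWithinAt f (Ioi s) s)
    (hsample : ∀ r ∈ sampleTimes t, a ≤ r → f r ∈ A) : ∀ s ∈ Icc a t, f s ∈ A := by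
  rintro s ⟨has, hst⟩
  rcases hst.eq_or_lt with rfl | hst
  · exact hsample s (mem_insert s _) has
  obtain ⟨u, -, hsu, hu⟩ := Real.exists_seq_rat_strictAnti_tendsto s
  refine hA.mem_of_tendsto ((hf s ⟨has, hst⟩).tendsto.comp
    (tendsto_nhdsWithin_of_tendsto_nhds_of_eventually_within _ hu (.of_forall hsu))) ?_
  filter_upwards [hu.eventually (gt_mem_nhds hst)] with n hnt
  exact hsample _ (Or.inr ⟨⟨(ha.trans has).trans (hsu n).le, hnt.le⟩, u n, rfl⟩)
    (has.trans (hsu n).le)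

theorem exists_isCompact_iff_exists_sampleTimes {Y Z : Type*} [TopologicalSpace Y] [T2Space Y]
    [TopologicalSpace Z] {ι : Z → Y} (hι : Continuous ι) {U : Set Z} {W : ℕ → Set Z}
    (hWc : ∀ m, IsCompact (closure (W m))) (hWU : ∀ m, closure (W m) ⊆ U)
    (hWcov : ∀ L, IsCompact L → L ⊆ U → ∃ m, L ⊆ W m) {f : ℝ → Y} {a t : ℝ} (ha : 0 ≤ a)
    (hf : f t ∈ range ι → ∀ s ∈ Ico a t, ContinuousWithinAt f (Ioi s) s) :
    (∃ K, IsCompact K ∧ K ⊆ U ∧ ∀ s ∈ Icc a t, f s ∈ ι '' K) ↔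
      ∃ m, ∀ r ∈ sampleTimes t, a ≤ r → f r ∈ ι '' W m := by
  constructor
  · rintro ⟨K, hK, hKU, hfK⟩
    obtain ⟨m, hm⟩ := hWcov K hK hKU
    exact ⟨m, fun r hr har => image_mono hm (hfK r ⟨har, le_of_mem_sampleTimes hr⟩)⟩
  · rintro ⟨m, hm⟩
    refine ⟨closure (W m), hWc m, hWU m, fun s hs => ?_⟩
    obtain ⟨z, -, hz⟩ := hm t (mem_insert t _) (hs.1.trans hs.2)
    exact mem_of_forall_sampleTimes ((hWc m).image hι).isClosed ha (hf ⟨z, hz⟩)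
      (fun r hr har => image_mono subset_closure (hm r hr har)) s hs

def dyadicCeil (n : ℕ) (u : ℝ) : ℝ := ⌈u * 2 ^ n⌉₊ / 2 ^ n

theorem le_dyadicCeil (n : ℕ) (u : ℝ) : u ≤ dyadicCeil n u := by
  rw [dyadicCeil, le_div_iff₀ (by positivity)]
  exact Nat.le_ceil _

theorem dyadicCeil_le (n : ℕ) {u : ℝ} (hu : 0 ≤ u) : dyadicCeil n u ≤ u + (1 / 2) ^ n := by
  rw [dyadicCeil, div_le_iff₀ (by positivity), add_mul, ← mul_pow, one_div,
    inv_mul_cancel₀ two_ne_zero, one_pow]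
  exact (Nat.ceil_lt_add_one (mul_nonneg hu (by positivity))).le

theorem tendsto_dyadicCeil {u : ℝ} (hu : 0 ≤ u) :
    Tendsto (fun n => dyadicCeil n u) atTop (𝓝 u) := by
  have hup : Tendsto (fun n : ℕ => u + (1 / 2 : ℝ) ^ n) atTop (𝓝 u) := by
    simpa using tendsto_const_nhds.add
      (tendsto_pow_atTop_nhds_zero_of_lt_one (r := (1 / 2 : ℝ)) (by norm_num) (by norm_num))
  exact tendsto_of_tendsto_of_tendsto_of_le_of_le tendsto_const_nhds hup
    (fun n => le_dyadicCeil n u) fun n => dyadicCeil_le n hu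

section Paths

variable {S : Type*} [TopologicalSpace S]

theorem DexpT.eq_infty_of_le (x : DexpT S) {s t : ℝ} (hst : s ≤ t)
    (hs : x.1 s = OnePoint.infty) : x.1 t = OnePoint.infty :=
  x.2.2.1 hst hs

theorem DexpT.isClosed_xiSet (x : DexpT S) : IsClosed (xiSet x.1) :=
  x.2.2.2.1

theorem DexpT.continuousWithinAt_Ioi (x : DexpT S) {s t : ℝ} (hs : 0 ≤ s) (hst : s ≤ t)
    (hx : x.1 t ≠ OnePoint.infty) : ContinuousWithinAt x.1 (Ioi s) s :=
  x.2.2.2.2.1 s hs fun h => hx (x.eq_infty_of_le hst h)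

theorem DexpT.continuousWithinAt_Ici (x : DexpT S) {t : ℝ} (ht : 0 ≤ t)
    (hx : x.1 t ≠ OnePoint.infty) : ContinuousWithinAt x.1 (Ici t) t :=
  continuousWithinAt_Ioi_iff_Ici.1 (x.continuousWithinAt_Ioi ht le_rfl hx)

theorem DexpT.exists_tendsto_nhdsLT (x : DexpT S) {t : ℝ} (ht : 0 < t)
    (hx : x.1 t ≠ OnePoint.infty) : ∃ a : S, Tendsto x.1 (𝓝[<] t) (𝓝 (a : OnePoint S)) :=
  x.2.2.2.2.2 t ht hx

theorem DexpT.eventually_mem_image (x : DexpT S) {t : ℝ} (ht : 0 ≤ t) {a : S}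
    (hxa : x.1 t = a) {N : Set S} (hN : N ∈ 𝓝 a) :
    ∀ᶠ s in 𝓝[≥] t, x.1 s ∈ OnePoint.some '' N := by
  have hcont := x.continuousWithinAt_Ici ht (hxa ▸ OnePoint.coe_ne_infty a)
  rw [ContinuousWithinAt, hxa] at hcont
  exact hcont.eventually_mem (OnePoint.isOpenEmbedding_coe.image_mem_nhds.2 hN)

theorem DexpT.tendsto_comp_of_ge (x : DexpT S) {s : ℝ} (hs : 0 ≤ s) {c : ℕ → ℝ}
    (hc : Tendsto c atTop (𝓝 s)) (hge : ∀ n, s ≤ c n) :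
    Tendsto (fun n => x.1 (c n)) atTop (𝓝 (x.1 s)) := by
  by_cases hx : x.1 s = OnePoint.infty
  · have hxc : ∀ n, x.1 (c n) = OnePoint.infty := fun n => x.eq_infty_of_le (hge n) hx
    simp only [hxc, hx]
    exact tendsto_const_nhds
  · exact (x.continuousWithinAt_Ici hs hx).tendsto.comp
      (tendsto_nhdsWithin_of_tendsto_nhds_of_eventually_within _ hc (.of_forall hge))

theorem evalE_min_ofReal (x : DexpT S) (τ : ℝ≥0∞) (t : ℝ) :
    evalE x.1 (min τ (ENNReal.ofReal t)) = x.1 (min τ (ENNReal.ofReal t)).toReal :=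
  if_neg (ne_top_of_le_ne_top ENNReal.ofReal_ne_top (min_le_right _ _))

theorem xiE_le_ofReal_iff (x : DexpT S) {t : ℝ} (ht : 0 ≤ t) :
    xiE x.1 ≤ ENNReal.ofReal t ↔ x.1 t = OnePoint.infty := by
  rw [xiE, iInf_ofReal_le_ofReal_iff ht fun hgt => ?_]
  · exact ⟨fun ⟨s, hs, hst⟩ => x.eq_infty_of_le hst hs, fun hx => ⟨t, hx, le_rfl⟩⟩
  · have ht' : t ∉ xiSet x.1 := fun h => lt_irrefl t (hgt t h)
    exact eventually_nhdsWithin_of_eventually_nhds (x.isClosed_xiSet.isOpen_compl.mem_nhds ht')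

/-- The set over which `tauU` takes its infimum. -/
def exitSet (U : Set S) (x : Path S) : Set ℝ :=
  {t : ℝ | 0 ≤ t ∧
      ((0 < t ∧ ¬ ∃ a ∈ U, Tendsto x (𝓝[<] t) (𝓝 (a : OnePoint S))) ∨
        ¬ ∃ a ∈ U, x t = (a : OnePoint S))}

theorem tauU_le_xiE (U : Set S) (x : DexpT S) : tauU U x.1 ≤ xiE x.1 := by
  refine le_iInf₂ fun s hs => ?_
  have hx : x.1 (max s 0) = OnePoint.infty := x.eq_infty_of_le (le_max_left s 0) hs
  have hexit : max s 0 ∈ exitSet U x.1 :=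
    ⟨le_max_right s 0, Or.inr fun ⟨a, _, ha⟩ => OnePoint.coe_ne_infty a (ha.symm.trans hx)⟩
  calc tauU U x.1 ≤ ENNReal.ofReal (max s 0) := iInf₂_le (max s 0) hexit
    _ = ENNReal.ofReal s := by simp [ENNReal.ofReal_max]

theorem notMem_exitSet [T2Space S] (x : DexpT S) {U K : Set S} (hK : IsCompact K) (hKU : K ⊆ U)
    {s : ℝ} (hs : x.1 s ∈ OnePoint.some '' K)
    (hleft : 0 < s → ∀ᶠ r in 𝓝[<] s, x.1 r ∈ OnePoint.some '' K) : s ∉ exitSet U x.1 := by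
  obtain ⟨a, ha, hxa⟩ := hs
  rintro ⟨-, ⟨hs0, hnolim⟩ | hnoval⟩
  · obtain ⟨c, hc⟩ := x.exists_tendsto_nhdsLT hs0 (hxa ▸ OnePoint.coe_ne_infty a)
    obtain ⟨c', hc', hcc⟩ :=
      (OnePoint.isClosed_image_coe.2 ⟨hK.isClosed, hK⟩).mem_of_tendsto hc (hleft hs0)
    exact hnolim ⟨c, hKU (OnePoint.coe_injective hcc ▸ hc'), hc⟩
  · exact hnoval ⟨a, hKU ha, hxa.symm⟩

theorem tauU_le_ofReal_iff [T2Space S] [LocallyCompactSpace S] {U : Set S} (hU : IsOpen U)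
    (x : DexpT S) {t : ℝ} (ht : 0 ≤ t) :
    tauU U x.1 ≤ ENNReal.ofReal t ↔ ∃ s ∈ exitSet U x.1, s ≤ t := by
  refine iInf_ofReal_le_ofReal_iff ht fun hgt => ?_
  obtain ⟨a, haU, hxa⟩ : ∃ a ∈ U, x.1 t = a := by
    by_contra h
    exact lt_irrefl t (hgt t ⟨ht, Or.inr h⟩)
  obtain ⟨N, hNc, haN, hNU⟩ := exists_compact_subset hU haU
  obtain ⟨δ, htδ, hδ⟩ := mem_nhdsGE_iff_exists_Icc_subset.1
    (x.eventually_mem_image ht hxa (mem_interior_iff_mem_nhds.1 haN))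
  filter_upwards [Ioo_mem_nhdsGT htδ] with s hs
  refine notMem_exitSet x hNc hNU (hδ ⟨hs.1.le, hs.2.le⟩) fun _ => ?_
  filter_upwards [Ioo_mem_nhdsLT hs.1] with r hr
  exact hδ ⟨hr.1.le, hr.2.le.trans hs.2.le⟩

theorem forall_notMem_exitSet_iff [T2Space S] [LocallyCompactSpace S] {U : Set S}
    (hU : IsOpen U) (x : DexpT S) {t : ℝ} :
    (∀ s ∈ Icc 0 t, s ∉ exitSet U x.1) ↔
      ∃ K, IsCompact K ∧ K ⊆ U ∧ ∀ s ∈ Icc 0 t, x.1 s ∈ OnePoint.some '' K := by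
  refine ⟨fun hno => isCompact_Icc.exists_isCompact_forall_mem_image fun s hs => ?_,
    fun ⟨K, hK, hKU, hxK⟩ s hs => notMem_exitSet x hK hKU (hxK s hs) fun hs0 => ?_⟩
  · -- compact neighbourhoods in `U` of `X_s` and of `X_{s-}` trap the path near `s`
    obtain ⟨a, haU, hxa⟩ : ∃ a ∈ U, x.1 s = a := by
      by_contra h
      exact hno s hs ⟨hs.1, Or.inr h⟩
    obtain ⟨N, hNc, haN, hNU⟩ := exists_compact_subset hU haU
    have hright := x.eventually_mem_image hs.1 hxa (mem_interior_iff_mem_nhds.1 haN)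
    obtain ⟨L, hLc, hLU, hleft⟩ : ∃ L, IsCompact L ∧ L ⊆ U ∧
        ∀ᶠ r in 𝓝[<] s, r ∈ Icc 0 t → x.1 r ∈ OnePoint.some '' L := by
      rcases hs.1.eq_or_lt with hs0 | hs0
      · refine ⟨∅, isCompact_empty, empty_subset U, ?_⟩
        filter_upwards [self_mem_nhdsWithin] with r hr hr'
        exact absurd hr'.1 (not_le.2 (hs0 ▸ hr))
      obtain ⟨c, hcU, hc⟩ : ∃ c ∈ U, Tendsto x.1 (𝓝[<] s) (𝓝 (c : OnePoint S)) := by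
        by_contra h
        exact hno s hs ⟨hs.1, Or.inl ⟨hs0, h⟩⟩
      obtain ⟨L, hLc, hcL, hLU⟩ := exists_compact_subset hU hcU
      exact ⟨L, hLc, hLU, (hc.eventually_mem (OnePoint.isOpenEmbedding_coe.image_mem_nhds.2
        (mem_interior_iff_mem_nhds.1 hcL))).mono fun r hr _ => hr⟩
    refine ⟨N ∪ L, hNc.union hLc, union_subset hNU hLU, eventually_nhdsWithin_iff.2 ?_⟩
    rw [← nhdsLT_sup_nhdsGE]
    exact ⟨hleft.mono fun r hr hrI => image_mono subset_union_right (hr hrI),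
      hright.mono fun r hr _ => image_mono subset_union_left hr⟩
  · filter_upwards [Ioo_mem_nhdsLT hs0] with r hr
    exact hxK r ⟨hr.1.le, hr.2.le.trans hs.2⟩

instance : MeasurableSpace (OnePoint S) := msOP S

instance inst_s1 : BorelSpace (OnePoint S) := ⟨rfl⟩

theorem filt_mono {α : Type*} (ev : α → Path S) {s t : ℝ} (hst : s ≤ t) :
    filt ev s ≤ filt ev t :=
  iSup₂_le fun r hr => le_iSup₂ (f := fun r (_ : r ∈ Icc (0:ℝ) t) =>
    MeasurableSpace.comap (fun x => ev x r) (msOP S)) r ⟨hr.1, hr.2.trans hst⟩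

theorem measurable_filt_eval {α : Type*} (ev : α → Path S) {s t : ℝ} (hs : s ∈ Icc 0 t) :
    Measurable[filt ev t] fun x => ev x s :=
  measurable_iff_comap_le.2 (le_iSup₂ (f := fun r (_ : r ∈ Icc (0:ℝ) t) =>
    MeasurableSpace.comap (fun x => ev x r) (msOP S)) s hs)

theorem IsStopping.measurableSet_le {α : Type*} {ev : α → Path S} {τ : α → ℝ≥0∞}
    (hτ : IsStopping ev τ) {r t : ℝ} (ht : 0 ≤ t) (hrt : r ≤ t) :
    MeasurableSet[filt ev t] {x | τ x ≤ ENNReal.ofReal r} := by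
  rcases le_total 0 r with hr | hr
  · exact filt_mono ev hrt _ (hτ r hr)
  · rw [ENNReal.ofReal_of_nonpos hr, ← ENNReal.ofReal_zero]
    exact filt_mono ev ht _ (hτ 0 le_rfl)

theorem IsStopping.measurable_min {α : Type*} {ev : α → Path S} {τ : α → ℝ≥0∞}
    (hτ : IsStopping ev τ) {t : ℝ} (ht : 0 ≤ t) :
    Measurable[filt ev t] fun x => min (τ x) (ENNReal.ofReal t) := by
  refine measurable_of_Iic fun c => ?_
  rcases le_or_gt (ENNReal.ofReal t) c with hc | hc
  · have hset : (fun x => min (τ x) (ENNReal.ofReal t)) ⁻¹' Iic c = univ :=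
      eq_univ_of_forall fun x => (min_le_right _ _).trans hc
    rw [hset]
    exact MeasurableSet.univ
  · have hset : (fun x => min (τ x) (ENNReal.ofReal t)) ⁻¹' Iic c =
        {x | τ x ≤ ENNReal.ofReal c.toReal} := by
      ext x
      simp [not_le.2 hc, ENNReal.ofReal_toReal (ne_top_of_lt hc)]
    rw [hset]
    exact hτ.measurableSet_le ht (ENNReal.toReal_le_of_le_ofReal ht hc.le)

theorem xiE_isStopping : IsStopping (Subtype.val : DexpT S → Path S) fun x => xiE x.1 := by
  intro t ht
  show MeasurableSet[filt _ t] {x : DexpT S | xiE x.1 ≤ ENNReal.ofReal t}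
  simp only [xiE_le_ofReal_iff _ ht]
  exact measurable_filt_eval _ ⟨ht, le_rfl⟩ (OnePoint.isClosed_infty (X := S)).measurableSet

theorem tauU_isStopping [T2Space S] [SecondCountableTopology S] [LocallyCompactSpace S]
    {U : Set S} (hU : IsOpen U) :
    IsStopping (Subtype.val : DexpT S → Path S) fun x => tauU U x.1 := by
  obtain ⟨W, hWo, hWc, hWU, hWcov⟩ := hU.exists_relCompact_exhaustion
  intro t ht
  show MeasurableSet[filt _ t] {x : DexpT S | tauU U x.1 ≤ ENNReal.ofReal t}
  have hset : {x : DexpT S | tauU U x.1 ≤ ENNReal.ofReal t} =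
      {x | ∃ m, ∀ r ∈ sampleTimes t, 0 ≤ r → x.1 r ∈ OnePoint.some '' W m}ᶜ := by
    ext x
    have hf (hxt : x.1 t ∈ range OnePoint.some) (s : ℝ) (hs : s ∈ Ico 0 t) :
        ContinuousWithinAt x.1 (Ioi s) s := by
      obtain ⟨a, ha⟩ := hxt
      exact x.continuousWithinAt_Ioi hs.1 hs.2.le (ha ▸ OnePoint.coe_ne_infty a)
    rw [mem_compl_iff, mem_ofPred, mem_ofPred, tauU_le_ofReal_iff hU x ht,
      ← exists_isCompact_iff_exists_sampleTimes OnePoint.continuous_coe hWc hWU hWcov le_rfl hf,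
      ← forall_notMem_exitSet_iff hU x]
    push Not
    exact ⟨fun ⟨s, hs, hst⟩ => ⟨s, ⟨hs.1, hst⟩, hs⟩, fun ⟨s, hs, hex⟩ => ⟨s, hex, hs.2⟩⟩
  rw [hset]
  simp_rw [ofPred_exists, ofPred_forall]
  refine (MeasurableSet.iUnion fun m => ?_).compl
  refine MeasurableSet.biInter (countable_sampleTimes t) fun r hr => ?_
  exact .iInter fun _ => measurable_filt_eval _ (sampleTimes_subset ht hr)
    (OnePoint.isOpen_image_coe.2 (hWo m)).measurableSet

theorem measurable_eval_projIcc [T2Space S] [SecondCountableTopology S] [LocallyCompactSpace S]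
    {t : ℝ} (ht : 0 ≤ t) :
    Measurable[(filt (Subtype.val : DexpT S → Path S) t).prod Real.measurableSpace]
      fun p : DexpT S × ℝ => p.1.1 (projIcc 0 t ht p.2) := by
  let : MeasurableSpace (DexpT S) := filt Subtype.val t
  -- by right-continuity, `X` is the pointwise limit of its values at dyadic times from above
  refine measurable_of_tendsto_metrizable' atTop (f := fun n (p : DexpT S × ℝ) =>
      p.1.1 (projIcc 0 t ht (dyadicCeil n (projIcc 0 t ht p.2)))) (fun n => ?_)
    (tendsto_pi_nhds.2 fun p => ?_)
  · have hG : Measurable fun q : DexpT S × ℕ => q.1.1 (projIcc 0 t ht ((q.2 : ℝ) / 2 ^ n)) :=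
      measurable_from_prod_countable_left fun k =>
        measurable_filt_eval (Subtype.val : DexpT S → Path S) (projIcc 0 t ht ((k : ℝ) / 2 ^ n)).2
    have hu : Measurable fun p : DexpT S × ℝ => (projIcc 0 t ht p.2 : ℝ) :=
      (continuous_subtype_val.comp continuous_projIcc).measurable.comp measurable_snd
    exact hG.comp (measurable_fst.prodMk (Nat.measurable_ceil.comp (hu.mul_const _)))
  · obtain ⟨x, s⟩ := p
    set u := projIcc 0 t ht s
    refine x.tendsto_comp_of_ge u.2.1 ?_ fun n => ?_
    · simpa [Function.comp_def] using
        ((continuous_subtype_val.comp (continuous_projIcc (h := ht))).tendsto _).comp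
          (tendsto_dyadicCeil u.2.1)
    · simpa using monotone_projIcc ht (le_dyadicCeil n u)

theorem measurable_hOP [T2Space S] [SecondCountableTopology S] [LocallyCompactSpace S]
    [MeasurableSpace S] [BorelSpace S] {g : S × S → ℝ} (hg : Measurable g) :
    Measurable fun p : OnePoint S × OnePoint S => hOP g p.1 p.2 := by
  have hinj := OnePoint.coe_injective (X := S)
  have hext : (fun p : OnePoint S × OnePoint S => hOP g p.1 p.2) =
      Function.extend (Prod.map OnePoint.some OnePoint.some) g 0 := by
    funext ⟨a, b⟩
    induction a using OnePoint.rec <;> induction b using OnePoint.rec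
    case coe.coe a b => exact ((hinj.prodMap hinj).extend_apply g 0 (a, b)).symm
    all_goals
      rw [Function.extend_apply' _ _ _ fun ⟨k, hk⟩ => by simp [Prod.ext_iff] at hk]
      rfl
  rw [hext]
  exact (OnePoint.isOpenEmbedding_coe.prodMap OnePoint.isOpenEmbedding_coe).measurableEmbedding
    |>.measurable_extend hg measurable_const

theorem measurable_evalE_min [T2Space S] [SecondCountableTopology S] [LocallyCompactSpace S]
    {τ₀ : DexpT S → ℝ≥0∞}
    (hτ₀ : IsStopping (Subtype.val : DexpT S → Path S) τ₀) {t : ℝ} (ht : 0 ≤ t) :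
    Measurable[filt (α := DexpT S) Subtype.val t]
      fun x : DexpT S => evalE x.1 (min (τ₀ x) (ENNReal.ofReal t)) := by
  let : MeasurableSpace (DexpT S) := filt Subtype.val t
  have hσ : Measurable fun x => (min (τ₀ x) (ENNReal.ofReal t)).toReal :=
    ENNReal.measurable_toReal.comp (hτ₀.measurable_min ht)
  have heq : (fun x : DexpT S => evalE x.1 (min (τ₀ x) (ENNReal.ofReal t))) =
      (fun p : DexpT S × ℝ => p.1.1 (projIcc 0 t ht p.2)) ∘
        fun x => (x, (min (τ₀ x) (ENNReal.ofReal t)).toReal) := by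
    funext x
    simp [evalE_min_ofReal, projIcc_of_mem ht (toReal_min_ofReal_mem_Icc (τ₀ x) ht)]
  rw [heq]
  exact (measurable_eval_projIcc ht).comp (measurable_id.prodMk hσ)

end Paths

section HitTime

variable {S : Type*} [MetricSpace S]

theorem pairOK_iff_exists_isCompact {𝒰 : Set (S × S)} {τ₀ : DexpT S → ℝ≥0∞} {x : DexpT S}
    {t : ℝ} (hτ : (τ₀ x).toReal ≤ t) :
    pairOK 𝒰 τ₀ x t ↔ ∃ K, IsCompact K ∧ K ⊆ 𝒰 ∧ ∀ s ∈ Icc (τ₀ x).toReal t,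
      (evalE x.1 (τ₀ x), x.1 s) ∈ Prod.map OnePoint.some OnePoint.some '' K := by
  constructor
  · rintro ⟨hY, hx, hK, hKU⟩
    refine ⟨_, hK, hKU, fun s hs => ?_⟩
    obtain ⟨b, hb⟩ := OnePoint.ne_infty_iff_exists.1 hY
    obtain ⟨a, ha⟩ := OnePoint.ne_infty_iff_exists.1 (hx s hs.1 hs.2)
    exact ⟨(b, a), subset_closure ⟨hb.symm, s, hs.1, hs.2, ha.symm⟩, by rw [← hb, ← ha]; rfl⟩
  · rintro ⟨K, hK, hKU, hmem⟩
    have hval : ∀ s ∈ Icc (τ₀ x).toReal t, ∃ k ∈ K,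
        evalE x.1 (τ₀ x) = k.1 ∧ x.1 s = k.2 := fun s hs => by
      obtain ⟨k, hk, hks⟩ := hmem s hs
      exact ⟨k, hk, (congrArg Prod.fst hks).symm, (congrArg Prod.snd hks).symm⟩
    have hsub : pairSet τ₀ x t ⊆ K := by
      rintro p ⟨hp₁, s, hs₁, hs₂, hp₂⟩
      obtain ⟨k, hk, hk₁, hk₂⟩ := hval s ⟨hs₁, hs₂⟩
      rwa [Prod.ext (OnePoint.coe_injective (hp₁.symm.trans hk₁))
        (OnePoint.coe_injective (hp₂.symm.trans hk₂))]
    have hcl : closure (pairSet τ₀ x t) ⊆ K := closure_minimal hsub hK.isClosed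
    obtain ⟨k, -, hk₁, -⟩ := hval t ⟨hτ, le_rfl⟩
    refine ⟨hk₁ ▸ OnePoint.coe_ne_infty _, fun s hs₁ hs₂ => ?_,
      hK.of_isClosed_subset isClosed_closure hcl, hcl.trans hKU⟩
    obtain ⟨k', -, -, hk'⟩ := hval s ⟨hs₁, hs₂⟩
    exact hk' ▸ OnePoint.coe_ne_infty _

theorem pairOK_congr {𝒰 : Set (S × S)} {τ τ' : DexpT S → ℝ≥0∞} {x : DexpT S}
    (hx : τ x = τ' x) (t : ℝ) : pairOK 𝒰 τ x t ↔ pairOK 𝒰 τ' x t := by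
  simp only [pairOK, pairSet, hx]

theorem hInt_congr (g : S × S → ℝ) {τ τ' : DexpT S → ℝ≥0∞} {x : DexpT S}
    (hx : τ x = τ' x) (t : ℝ) : hInt g τ x t = hInt g τ' x t := by
  simp only [hInt, hx]

theorem pairOK_of_le {𝒰 : Set (S × S)} {τ₀ : DexpT S → ℝ≥0∞} {x : DexpT S} {t t' : ℝ}
    (htt' : t ≤ t') (hOK : pairOK 𝒰 τ₀ x t') : pairOK 𝒰 τ₀ x t := by
  obtain ⟨hY, hx, hK, hKU⟩ := hOK
  have hsub : closure (pairSet τ₀ x t) ⊆ closure (pairSet τ₀ x t') :=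
    closure_mono fun p ⟨hp₁, s, hs₁, hs₂, hp₂⟩ => ⟨hp₁, s, hs₁, hs₂.trans htt', hp₂⟩
  exact ⟨hY, fun s hs₁ hs₂ => hx s hs₁ (hs₂.trans htt'),
    hK.of_isClosed_subset isClosed_closure hsub, hsub.trans hKU⟩

theorem exists_pairOK_gt [LocallyCompactSpace S] {𝒰 : Set (S × S)} (h𝒰 : IsOpen 𝒰)
    {τ₀ : DexpT S → ℝ≥0∞} {x : DexpT S} {t : ℝ} (hτ : (τ₀ x).toReal ≤ t)
    (hOK : pairOK 𝒰 τ₀ x t) : ∃ t' > t, pairOK 𝒰 τ₀ x t' := by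
  obtain ⟨K, hK, hKU, hmem⟩ := (pairOK_iff_exists_isCompact hτ).1 hOK
  obtain ⟨⟨b, a⟩, hba, hY, hxt⟩ : ∃ k ∈ K, (k.1 : OnePoint S) = evalE x.1 (τ₀ x) ∧
      (k.2 : OnePoint S) = x.1 t := by
    obtain ⟨k, hk, hkt⟩ := hmem t ⟨hτ, le_rfl⟩
    exact ⟨k, hk, congrArg Prod.fst hkt, congrArg Prod.snd hkt⟩
  -- a compact neighbourhood `N` of `X_t` with `{X_{τ₀}} × N ⊆ 𝒰` absorbs the path just after `t`
  obtain ⟨N, hN, haN, hNU⟩ := exists_compact_subset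
    (h𝒰.preimage (Continuous.prodMk_right b)) (hKU hba)
  obtain ⟨t', htt', hN'⟩ := mem_nhdsGE_iff_exists_Icc_subset.1
    (x.eventually_mem_image (ENNReal.toReal_nonneg.trans hτ) hxt.symm
      (mem_interior_iff_mem_nhds.1 haN))
  have hbN : {b} ×ˢ N ⊆ 𝒰 := by
    rintro ⟨b', n⟩ ⟨rfl, hn⟩
    exact hNU hn
  refine ⟨t', htt', (pairOK_iff_exists_isCompact (hτ.trans htt'.le)).2
    ⟨K ∪ {b} ×ˢ N, hK.union (isCompact_singleton.prod hN), union_subset hKU hbN, ?_⟩⟩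
  rintro s ⟨hs₁, hs₂⟩
  rcases le_or_gt s t with hst | hts
  · exact image_mono subset_union_left (hmem s ⟨hs₁, hst⟩)
  · obtain ⟨n, hn, hxn⟩ := hN' ⟨hts.le, hs₂⟩
    exact ⟨(b, n), Or.inr ⟨rfl, hn⟩, by rw [← hY, ← hxn]; rfl⟩

theorem exists_hOP_le_of_pairOK {𝒰 : Set (S × S)} {h : S × S → ℝ} (hcont : ContinuousOn h 𝒰)
    {τ₀ : DexpT S → ℝ≥0∞} {x : DexpT S} {t : ℝ} (hτ : (τ₀ x).toReal ≤ t)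
    (hOK : pairOK 𝒰 τ₀ x t) :
    ∃ C, ∀ s ∈ Icc (τ₀ x).toReal t, hOP h (evalE x.1 (τ₀ x)) (x.1 s) ≤ C := by
  obtain ⟨K, hK, hKU, hmem⟩ := (pairOK_iff_exists_isCompact hτ).1 hOK
  obtain ⟨C, hC⟩ := hK.exists_bound_of_continuousOn (hcont.mono hKU)
  refine ⟨C, fun s hs => ?_⟩
  obtain ⟨⟨b, a⟩, hk, hks⟩ := hmem s hs
  simp only [Prod.map, Prod.mk.injEq] at hks
  rw [← hks.1, ← hks.2]
  exact (Real.le_norm_self _).trans (hC _ hk)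

theorem hInt_le_add (g : S × S → ℝ) (τ₀ : DexpT S → ℝ≥0∞) (x : DexpT S) {t s C : ℝ}
    (hτ : (τ₀ x).toReal ≤ t) (hts : t ≤ s)
    (hC : ∀ r ∈ Ioc t s, hOP g (evalE x.1 (τ₀ x)) (x.1 r) ≤ C) :
    hInt g τ₀ x s ≤ hInt g τ₀ x t + ENNReal.ofReal C * ENNReal.ofReal (s - t) := by
  rw [hInt, hInt, ← Ioc_union_Ioc_eq_Ioc hτ hts,
    lintegral_union measurableSet_Ioc (Ioc_disjoint_Ioc_of_le le_rfl)]
  gcongr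
  calc ∫⁻ r in Ioc t s, ENNReal.ofReal (hOP g (evalE x.1 (τ₀ x)) (x.1 r))
      ≤ ∫⁻ _ in Ioc t s, ENNReal.ofReal C :=
        setLIntegral_mono' measurableSet_Ioc fun r hr => ENNReal.ofReal_le_ofReal (hC r hr)
    _ = ENNReal.ofReal C * ENNReal.ofReal (s - t) := by
        rw [setLIntegral_const, Real.volume_Ioc]

theorem eventually_hInt_lt [LocallyCompactSpace S] {𝒰 : Set (S × S)} (h𝒰 : IsOpen 𝒰)
    {h : S × S → ℝ} (hcont : ContinuousOn h 𝒰) {τ₀ : DexpT S → ℝ≥0∞} {x : DexpT S} {t : ℝ}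
    (hτ : (τ₀ x).toReal ≤ t) (hOK : pairOK 𝒰 τ₀ x t) {c : ℝ≥0∞} (hlt : hInt h τ₀ x t < c) :
    ∀ᶠ s in 𝓝[>] t, hInt h τ₀ x s < c := by
  obtain ⟨t', htt', hOK'⟩ := exists_pairOK_gt h𝒰 hτ hOK
  obtain ⟨C, hC⟩ := exists_hOP_le_of_pairOK hcont (hτ.trans htt'.le) hOK'
  have hlim : Tendsto (fun s => hInt h τ₀ x t + ENNReal.ofReal C * ENNReal.ofReal (s - t))
      (𝓝[>] t) (𝓝 (hInt h τ₀ x t)) := by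
    have h0 : Tendsto (fun s => ENNReal.ofReal (s - t)) (𝓝[>] t) (𝓝 0) := by
      simpa using ENNReal.tendsto_ofReal (((continuous_sub_right t).tendsto t).mono_left
        nhdsWithin_le_nhds)
    simpa using tendsto_const_nhds.add (ENNReal.Tendsto.const_mul h0 (Or.inr ENNReal.ofReal_ne_top))
  filter_upwards [Ioc_mem_nhdsGT htt', hlim.eventually_lt_const hlt] with s hs hbound
  refine (hInt_le_add h τ₀ x hτ hs.1.le fun r hr => hC r ?_).trans_lt hbound
  exact ⟨hτ.trans hr.1.le, hr.2.trans hs.2⟩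

theorem tauHit_le_ofReal_iff [LocallyCompactSpace S] {𝒰 : Set (S × S)} (h𝒰 : IsOpen 𝒰)
    {h : S × S → ℝ} (hcont : ContinuousOn h 𝒰) {τ₀ M : DexpT S → ℝ≥0∞} (x : DexpT S) {t : ℝ}
    (ht : 0 ≤ t) :
    tauHit 𝒰 h τ₀ M x ≤ ENNReal.ofReal t ↔
      τ₀ x ≤ ENNReal.ofReal t ∧ (¬ pairOK 𝒰 τ₀ x t ∨ M x ≤ hInt h τ₀ x t) := by
  rw [tauHit, iInf_ofReal_le_ofReal_iff ht fun hgt => ?_]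
  · refine ⟨fun ⟨s, ⟨_, hτs, hs⟩, hst⟩ => ⟨hτs.trans (ENNReal.ofReal_le_ofReal hst), ?_⟩,
      fun hx => ⟨t, ⟨ht, hx⟩, le_rfl⟩⟩
    exact hs.imp (fun hn hOK => hn (pairOK_of_le hst hOK))
      fun hM => hM.trans (lintegral_mono_set (Ioc_subset_Ioc le_rfl hst))
  by_cases hτ : τ₀ x ≤ ENNReal.ofReal t
  · obtain ⟨hOK, hlt⟩ : pairOK 𝒰 τ₀ x t ∧ hInt h τ₀ x t < M x := by
      by_contra hcon
      rw [not_and_or, not_lt] at hcon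
      exact lt_irrefl t (hgt t ⟨ht, hτ, hcon⟩)
    have hτ' := ENNReal.toReal_le_of_le_ofReal ht hτ
    obtain ⟨t', htt', hOK'⟩ := exists_pairOK_gt h𝒰 hτ' hOK
    filter_upwards [Ioc_mem_nhdsGT htt', eventually_hInt_lt h𝒰 hcont hτ' hOK hlt]
      with s hs hslt hmem
    exact hmem.2.2.elim (fun hn => hn (pairOK_of_le hs.2 hOK')) (not_le.2 hslt)
  · filter_upwards [((ENNReal.continuous_ofReal.tendsto t).mono_left
      nhdsWithin_le_nhds).eventually_lt_const (not_le.1 hτ)] with s hs hmem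
    exact not_le.2 hs hmem.2.1

theorem pairOK_iff_exists_sampleTimes [LocallyCompactSpace S] {𝒰 : Set (S × S)}
    {W : ℕ → Set (S × S)} (hWc : ∀ m, IsCompact (closure (W m))) (hWU : ∀ m, closure (W m) ⊆ 𝒰)
    (hWcov : ∀ L, IsCompact L → L ⊆ 𝒰 → ∃ m, L ⊆ W m) {τ₀ : DexpT S → ℝ≥0∞} {x : DexpT S}
    {t : ℝ} (hτ : (τ₀ x).toReal ≤ t) :
    pairOK 𝒰 τ₀ x t ↔ ∃ m, ∀ r ∈ sampleTimes t, (τ₀ x).toReal ≤ r →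
      (evalE x.1 (τ₀ x), x.1 r) ∈ Prod.map OnePoint.some OnePoint.some '' W m := by
  rw [pairOK_iff_exists_isCompact hτ]
  refine exists_isCompact_iff_exists_sampleTimes
    (OnePoint.continuous_coe.prodMap OnePoint.continuous_coe) hWc hWU hWcov
    ENNReal.toReal_nonneg fun ⟨⟨b, a⟩, hba⟩ s hs => ?_
  have hxt : x.1 t ≠ OnePoint.infty := fun h =>
    OnePoint.coe_ne_infty a ((congrArg Prod.snd hba).trans h)
  exact continuousWithinAt_const.prodMk
    (x.continuousWithinAt_Ioi (ENNReal.toReal_nonneg.trans hs.1) hs.2.le hxt)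

theorem hInt_indicator_of_pairOK {𝒰 : Set (S × S)} {h : S × S → ℝ} {τ₀ : DexpT S → ℝ≥0∞}
    {x : DexpT S} {t : ℝ} (hOK : pairOK 𝒰 τ₀ x t) :
    hInt (𝒰.indicator h) τ₀ x t = hInt h τ₀ x t := by
  refine setLIntegral_congr_fun measurableSet_Ioc fun s hs => ?_
  obtain ⟨b, hb⟩ := OnePoint.ne_infty_iff_exists.1 hOK.1
  obtain ⟨a, ha⟩ := OnePoint.ne_infty_iff_exists.1 (hOK.2.1 s hs.1.le hs.2)
  rw [← hb, ← ha]
  exact congrArg ENNReal.ofReal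
    (indicator_of_mem (hOK.2.2.2 (subset_closure ⟨hb.symm, s, hs.1.le, hs.2, ha.symm⟩)) h)

end HitTime

theorem measurable_hInt_min [MeasurableSpace S] [BorelSpace S] {g : S × S → ℝ}
    (hg : Measurable g) {τ₀ : DexpT S → ℝ≥0∞}
    (hτ₀ : IsStopping (Subtype.val : DexpT S → Path S) τ₀) {t : ℝ} (ht : 0 ≤ t) :
    Measurable[filt (α := DexpT S) Subtype.val t]
      fun x : DexpT S => hInt g (fun y => min (τ₀ y) (ENNReal.ofReal t)) x t := by
  let : MeasurableSpace (DexpT S) := filt Subtype.val t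
  have hσ : Measurable fun x => (min (τ₀ x) (ENNReal.ofReal t)).toReal :=
    ENNReal.measurable_toReal.comp (hτ₀.measurable_min ht)
  let F : DexpT S × ℝ → ℝ≥0∞ :=
    ({q | (min (τ₀ q.1) (ENNReal.ofReal t)).toReal < q.2} ∩ {q | q.2 ≤ t}).indicator fun q =>
      ENNReal.ofReal (hOP g (evalE q.1.1 (min (τ₀ q.1) (ENNReal.ofReal t)))
        (q.1.1 (projIcc 0 t ht q.2)))
  have hF : Measurable F :=
    (ENNReal.measurable_ofReal.comp ((measurable_hOP hg).comp
      (((measurable_evalE_min hτ₀ ht).comp measurable_fst).prodMk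
        (measurable_eval_projIcc ht)))).indicator
      ((measurableSet_lt (hσ.comp measurable_fst) measurable_snd).inter
        (measurableSet_le measurable_snd measurable_const))
  have heq : (fun x : DexpT S => hInt g (fun y => min (τ₀ y) (ENNReal.ofReal t)) x t) =
      fun x => ∫⁻ s, F (x, s) := by
    funext x
    rw [hInt, ← lintegral_indicator measurableSet_Ioc]
    refine lintegral_congr fun s => ?_
    simp only [F]
    by_cases hs : s ∈ Ioc (min (τ₀ x) (ENNReal.ofReal t)).toReal t
    · have hs' : s ∈ Icc 0 t := ⟨ENNReal.toReal_nonneg.trans hs.1.le, hs.2⟩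
      rw [indicator_of_mem hs, indicator_of_mem (show (x, s) ∈ _ from hs), projIcc_of_mem ht hs']
    · rw [indicator_of_notMem hs, indicator_of_notMem (show (x, s) ∉ _ from hs)]
  rw [heq]
  exact hF.lintegral_prod_right'

theorem measurableSet_pairOK_min {𝒰 : Set (S × S)} (h𝒰 : IsOpen 𝒰) {τ₀ : DexpT S → ℝ≥0∞}
    (hτ₀ : IsStopping (Subtype.val : DexpT S → Path S) τ₀) {t : ℝ} (ht : 0 ≤ t) :
    MeasurableSet[filt (α := DexpT S) Subtype.val t]
      {x : DexpT S | pairOK 𝒰 (fun y => min (τ₀ y) (ENNReal.ofReal t)) x t} := by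
  let : MeasurableSpace (DexpT S) := filt Subtype.val t
  obtain ⟨W, hWo, hWc, hWU, hWcov⟩ := h𝒰.exists_relCompact_exhaustion
  have hset : {x : DexpT S | pairOK 𝒰 (fun y => min (τ₀ y) (ENNReal.ofReal t)) x t} =
      ⋃ m, ⋂ r ∈ sampleTimes t, {x | (min (τ₀ x) (ENNReal.ofReal t)).toReal ≤ r →
        (evalE x.1 (min (τ₀ x) (ENNReal.ofReal t)), x.1 r) ∈
          Prod.map OnePoint.some OnePoint.some '' W m} := by
    ext x
    simp only [mem_iUnion, mem_iInter, mem_ofPred]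
    exact pairOK_iff_exists_sampleTimes hWc hWU hWcov (toReal_min_ofReal_mem_Icc _ ht).2
  rw [hset]
  refine .iUnion fun m => .biInter (countable_sampleTimes t) fun r hr => .imp ?_ ?_
  · exact measurableSet_le (ENNReal.measurable_toReal.comp (hτ₀.measurable_min ht))
      measurable_const
  · exact ((measurable_evalE_min hτ₀ ht).prodMk
      (measurable_filt_eval _ (sampleTimes_subset ht hr))) ((OnePoint.isOpenEmbedding_coe.prodMap
        OnePoint.isOpenEmbedding_coe).isOpenMap _ (hWo m)).measurableSet

theorem measurableSet_tauHit_le {𝒰 : Set (S × S)} (h𝒰 : IsOpen 𝒰) {h : S × S → ℝ}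
    (hcont : ContinuousOn h 𝒰) {τ₀ M : DexpT S → ℝ≥0∞}
    (hτ₀ : IsStopping (Subtype.val : DexpT S → Path S) τ₀)
    {t : ℝ} (ht : 0 ≤ t)
    (hM : ∀ c : ℝ≥0∞, MeasurableSet[filt (α := DexpT S) Subtype.val t]
      ({x : DexpT S | M x ≤ c} ∩ {x : DexpT S | τ₀ x ≤ ENNReal.ofReal t})) :
    MeasurableSet[filt (α := DexpT S) Subtype.val t]
      {x : DexpT S | tauHit 𝒰 h τ₀ M x ≤ ENNReal.ofReal t} := by
  let : MeasurableSpace S := borel S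
  have : BorelSpace S := ⟨rfl⟩
  -- on `{τ₀ ≤ t}` the conditions at time `t` only see `τ₀ ∧ t`, which is `𝓕_t`-measurable
  let τt : DexpT S → ℝ≥0∞ := fun y => min (τ₀ y) (ENNReal.ofReal t)
  let T := {x : DexpT S | τ₀ x ≤ ENNReal.ofReal t}
  have hset : {x : DexpT S | tauHit 𝒰 h τ₀ M x ≤ ENNReal.ofReal t} =
      T ∩ {x | pairOK 𝒰 τt x t}ᶜ ∪ {x | M x ≤ hInt (𝒰.indicator h) τt x t} ∩ T := by
    ext x
    rw [mem_ofPred, tauHit_le_ofReal_iff h𝒰 hcont x ht]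
    by_cases hx : τ₀ x ≤ ENNReal.ofReal t
    · have hτt : τt x = τ₀ x := min_eq_left hx
      by_cases hOK : pairOK 𝒰 τ₀ x t
      · simp [T, hx, hOK, pairOK_congr hτt, hInt_congr _ hτt, hInt_indicator_of_pairOK hOK]
      · simp [T, hx, hOK, pairOK_congr hτt]
    · simp [T, hx]
  rw [hset]
  exact ((hτ₀ t ht).inter (measurableSet_pairOK_min h𝒰 hτ₀ ht).compl).union
    (measurableSet_le_inter (measurable_hInt_min (hcont.measurable_indicator h𝒰) hτ₀ ht) hM)

theorem tauHit_isStopping_general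
    (𝒰 : Set (S × S)) (h𝒰 : IsOpen 𝒰)
    (h : S × S → ℝ) (hcont : ContinuousOn h 𝒰)
    (τ₀ : DexpT S → ℝ≥0∞) (hτ₀ : IsStopping (Subtype.val : DexpT S → Path S) τ₀)
    (M : DexpT S → ℝ≥0∞)
    (hM : ∀ (c : ℝ≥0∞) (t : ℝ), 0 ≤ t →
      MeasurableSet[filt (Subtype.val : DexpT S → Path S) t]
        ({x : DexpT S | M x ≤ c} ∩ {x : DexpT S | τ₀ x ≤ ENNReal.ofReal t})) :
    IsStopping (Subtype.val : DexpT S → Path S) (tauHit 𝒰 h τ₀ M) ∧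
    IsStopping (Subtype.val : DexpT S → Path S) (fun x => xiE x.1) ∧
    (∀ U : Set S, IsOpen U →
      IsStopping (Subtype.val : DexpT S → Path S) (fun x => tauU U x.1) ∧
      ∀ x : DexpT S, tauU U x.1 ≤ xiE x.1) :=
  ⟨fun t ht => measurableSet_tauHit_le h𝒰 hcont hτ₀ ht (hM · t ht), xiE_isStopping,
    fun U hU => ⟨tauU_isStopping hU, tauU_le_xiE U⟩⟩

/-- Corollary 2.3. For any `(𝓕_t)`-stopping time `τ₀`, any open
`𝒰 ⊆ S²`, any continuous `h ∈ C(𝒰, ℝ₊)` and any `𝓕_{τ₀}`-measurable `M : 𝔻_exp(S) → [0,∞]`,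
the time `τ = inf {t ≥ τ₀ | {(X_{τ₀}, X_s)}_{τ₀ ≤ s ≤ t} ⋐̸ 𝒰 or ∫_{τ₀}^t h(X_{τ₀}, X_s) ds ≥ M}`
is an `(𝓕_t)`-stopping time.  In particular the explosion time `ξ` is an `(𝓕_t)`-stopping
time, and for every open `U ⊆ S` the exit time `τ^U ≤ ξ` is an `(𝓕_t)`-stopping time. -/
theorem tauHit_isStopping
    (𝒰 : Set (S × S)) (h𝒰 : IsOpen 𝒰)
    (h : S × S → ℝ) (hcont : ContinuousOn h 𝒰) (hnonneg : ∀ p ∈ 𝒰, 0 ≤ h p)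
    (τ₀ : DexpT S → ℝ≥0∞) (hτ₀ : IsStopping (Subtype.val : DexpT S → Path S) τ₀)
    (M : DexpT S → ℝ≥0∞)
    (hM : ∀ (c : ℝ≥0∞) (t : ℝ), 0 ≤ t →
      MeasurableSet[filt (Subtype.val : DexpT S → Path S) t]
        ({x : DexpT S | M x ≤ c} ∩ {x : DexpT S | τ₀ x ≤ ENNReal.ofReal t})) :
    IsStopping (Subtype.val : DexpT S → Path S) (tauHit 𝒰 h τ₀ M) ∧
    IsStopping (Subtype.val : DexpT S → Path S) (fun x => xiE x.1) ∧
    (∀ U : Set S, IsOpen U →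
      IsStopping (Subtype.val : DexpT S → Path S) (fun x => tauU U x.1) ∧
      ∀ x : DexpT S, tauU U x.1 ≤ xiE x.1) :=
  tauHit_isStopping_general 𝒰 h𝒰 h hcont τ₀ hτ₀ M hM

end LocSkor
end
end

section
/- A path x ∈ D_exp(S) belongs to D_loc(S) if and only if for every t ≥ 0 and every compact subset K ⊂ S, ω'_{t,K,x}(δ) → 0 as δ → 0. -/
open Filter Topology Set MeasureTheory
open scoped ENNReal NNReal

noncomputable section

namespace LocSkor

variable {S : Type*} [TopologicalSpace S]

/-!
(⇒) Cut `[0, ∞)` greedily: each new point is the first time after the previous one at which `x`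
explodes or leaves the closed `r`-ball around its value there. Right-continuity makes every step
positive, and the procedure leaves `[0, t] × K` after finitely many steps: otherwise its points
would increase to some `L ≤ t` while `x` jumps by at least `r` at each of them, yet `x` stays in a
compact neighbourhood of `K` before `L` and so has a left limit at `L` (by the defining property
of `𝔻_loc(S)` when `L = ξ(x)`).

(⇐) If `{x_s : s < ξ(x)}` has compact closure `K`, every admissible partition for
`ω'_{ξ(x),K,x}(δ)` ends exactly at `ξ(x)`, so a small `ω'` bounds the oscillation of `x` on some
`[t', ξ(x))`. Hence `x_s` is Cauchy as `s ↑ ξ(x)` and converges in `K`.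
-/

section Partitions

variable {S : Type*} {ρ : S → S → ℝ} {x : Path S} {t δ ε : ℝ} {K : Set S} {N : ℕ} {ts : ℕ → ℝ}

def IsOmegaPartition (t : ℝ) (K : Set S) (x : Path S) (δ : ℝ) (N : ℕ) (ts : ℕ → ℝ) : Prop :=
  ts 0 = 0 ∧ (∀ i < N, ts i + δ < ts (i + 1)) ∧
    (∀ s : ℝ, 0 ≤ s → s < ts N → x s ≠ OnePoint.infty) ∧
    ¬ (ts N ≤ t ∧ ∃ a ∈ K, x (ts N) = (a : OnePoint S))

lemma IsOmegaPartition.nonneg (hp : IsOmegaPartition t K x δ N ts) (hδ : 0 ≤ δ) {i : ℕ}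
    (hi : i ≤ N) : 0 ≤ ts i := by
  induction i with
  | zero => exact hp.1.ge
  | succ i ih => linarith [ih (by omega), hp.2.1 i hi]

lemma IsOmegaPartition.eventually_nhds (hp : IsOmegaPartition t K x 0 N ts) :
    ∀ᶠ δ in 𝓝 0, IsOmegaPartition t K x δ N ts := by
  obtain ⟨h0, hgap, hxi, hend⟩ := hp
  have hgaps : ∀ᶠ δ in 𝓝 (0 : ℝ), ∀ i ∈ Iio N, ts i + δ < ts (i + 1) := by
    refine (eventually_all_finite (finite_Iio N)).2 fun i hi => ?_
    have hlt := hgap i hi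
    filter_upwards [eventually_lt_nhds (sub_pos.2 (add_zero (ts i) ▸ hlt))] with δ hδ
    linarith
  filter_upwards [hgaps] with δ hδ using ⟨h0, hδ, hxi, hend⟩

lemma omegaMod_le_ofReal (hp : IsOmegaPartition t K x δ N ts)
    (hosc : ∀ i < N, ∀ s₁ ∈ Ico (ts i) (ts (i + 1)), ∀ s₂ ∈ Ico (ts i) (ts (i + 1)),
      dd ρ (x s₁) (x s₂) ≤ ε) :
    omegaMod ρ t K x δ ≤ ENNReal.ofReal ε :=
  (iInf₂_le (N, ts) hp).trans <| iSup₂_le fun i hi => iSup₂_le fun s₁ hs₁ =>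
    iSup₂_le fun s₂ hs₂ => ENNReal.ofReal_le_ofReal (hosc i hi s₁ hs₁ s₂ hs₂)

lemma exists_isOmegaPartition_of_omegaMod_lt (h : omegaMod ρ t K x δ < ENNReal.ofReal ε) :
    ∃ N ts, IsOmegaPartition t K x δ N ts ∧
      ∀ i < N, ∀ s₁ ∈ Ico (ts i) (ts (i + 1)), ∀ s₂ ∈ Ico (ts i) (ts (i + 1)),
        dd ρ (x s₁) (x s₂) < ε := by
  obtain ⟨⟨N, ts⟩, hlt⟩ := iInf_lt_iff.1 h
  obtain ⟨hp, hlt⟩ := iInf_lt_iff.1 hlt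
  refine ⟨N, ts, hp, fun i hi s₁ hs₁ s₂ hs₂ => (ENNReal.ofReal_lt_ofReal_iff'.1 ?_).1⟩
  refine lt_of_le_of_lt ?_ hlt
  exact le_iSup₂_of_le i hi <| le_iSup₂_of_le s₁ hs₁ <|
    le_iSup₂ (f := fun s₂ (_ : s₂ ∈ Ico (ts i) (ts (i + 1))) =>
      ENNReal.ofReal (dd ρ (x s₁) (x s₂))) s₂ hs₂

lemma isLeast_xiR (hclosed : IsClosed (xiSet x)) (hexp : explodes x) (hpos : 0 < xiR x) :
    IsLeast (xiSet x) (xiR x) := by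
  have hbdd : BddBelow (xiSet x) := by
    by_contra h
    exact hpos.ne' (Real.sInf_of_not_bddBelow h)
  exact ⟨hclosed.csInf_mem hexp hbdd, fun _ hs => csInf_le hbdd hs⟩

lemma exists_lt_forall_dd_lt_of_omegaMod_lt {ξ : ℝ} (hξ : IsLeast (xiSet x) ξ) (hξ0 : 0 < ξ)
    (hK : pathRange x ⊆ K) (hδ : 0 ≤ δ) (h : omegaMod ρ ξ K x δ < ENNReal.ofReal ε) :
    ∃ t' < ξ, ∀ s₁ ∈ Ico t' ξ, ∀ s₂ ∈ Ico t' ξ, dd ρ (x s₁) (x s₂) < ε := by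
  obtain ⟨N, ts, hp, hosc⟩ := exists_isOmegaPartition_of_omegaMod_lt h
  have hnonneg := hp.nonneg hδ le_rfl
  obtain ⟨h0, hgap, hxi, hend⟩ := hp
  have hN : ts N = ξ := by
    refine le_antisymm (not_lt.1 fun hlt => hxi ξ hξ0.le hlt hξ.1) (not_lt.1 fun hlt => ?_)
    obtain ⟨c, hc⟩ := OnePoint.ne_infty_iff_exists.1 fun h => (hξ.2 h).not_gt hlt
    exact hend ⟨hlt.le, c, hK ⟨ts N, hnonneg, hc.symm⟩, hc.symm⟩
  obtain ⟨M, rfl⟩ : ∃ M, N = M + 1 :=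
    Nat.exists_eq_succ_of_ne_zero fun hN0 => hξ0.ne (h0 ▸ hN0 ▸ hN)
  refine ⟨ts M, ?_, fun s₁ hs₁ s₂ hs₂ => hosc M M.lt_succ_self s₁ ?_ s₂ ?_⟩
  · linarith [hgap M M.lt_succ_self]
  · rwa [hN]
  · rwa [hN]

end Partitions

lemma IsDexp.tendsto_nhdsGT {x : Path S} (hx : IsDexp x) {v : ℝ} (hv : 0 ≤ v) {a : S}
    (ha : x v = a) : Tendsto x (𝓝[>] v) (𝓝 (x v)) :=
  hx.2.2.2.1 v hv (ha ▸ OnePoint.coe_ne_infty a)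

lemma IsDloc.exists_tendsto_nhdsLT [R1Space S] {x : Path S} (hx : IsDloc x) {L : ℝ}
    (hL : 0 < L) {K : Set S} (hK : IsCompact K) (hrange : ∀ s, 0 ≤ s → s < L → ∃ c ∈ K, x s = c) :
    ∃ b : S, Tendsto x (𝓝[<] L) (𝓝 b) := by
  obtain ⟨⟨hneg, hmono, -, -, hll⟩, hloc⟩ := hx
  by_cases hxL : x L = OnePoint.infty
  swap
  · exact hll L hL hxL
  have hlt : ∀ s < L, x s ≠ OnePoint.infty := by
    intro s hs
    rcases le_total 0 s with h | h
    · obtain ⟨c, -, hc⟩ := hrange s h hs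
      simp [hc]
    · obtain ⟨c, -, hc⟩ := hrange 0 le_rfl hL
      simp [hneg s h, hc]
  have hξ : xiR x = L := IsLeast.csInf_eq ⟨hxL, fun s hs => not_lt.1 fun h => hlt s h hs⟩
  have hsub : pathRange x ⊆ K := by
    rintro a ⟨s, hs0, hsa⟩
    have hsL : s < L := not_le.1 fun h => OnePoint.coe_ne_infty a (hsa.symm.trans (hmono h hxL))
    obtain ⟨c, hc, hxc⟩ := hrange s hs0 hsL
    rwa [← OnePoint.coe_injective (hxc.symm.trans hsa)]
  obtain ⟨b, hb⟩ := hloc ⟨⟨L, hxL⟩, hξ ▸ hL, hK.closure_of_subset hsub⟩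
  exact ⟨b, hξ ▸ hb⟩

lemma IsDloc.exists_tendsto_comp_of_strictMono [R1Space S] {x : Path S} (hx : IsDloc x)
    {K : Set S} (hK : IsCompact K) {ts : ℕ → ℝ} (hts : StrictMono ts) (h0 : ts 0 = 0)
    (hbdd : BddAbove (range ts))
    (hrange : ∀ n, ∀ s ∈ Ico (ts n) (ts (n + 1)), ∃ c ∈ K, x s = c) :
    ∃ b : S, Tendsto (fun n => x (ts n)) atTop (𝓝 b) := by
  have hlim : Tendsto ts atTop (𝓝 (⨆ n, ts n)) := tendsto_atTop_ciSup hts.monotone hbdd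
  have hlt : ∀ n, ts n < ⨆ n, ts n := fun n =>
    (hts n.lt_succ_self).trans_le (le_ciSup hbdd _)
  obtain ⟨b, hb⟩ := hx.exists_tendsto_nhdsLT (h0 ▸ hlt 0) hK fun s hs hsL => by
    obtain ⟨m, hm⟩ := (hlim.eventually (eventually_gt_nhds hsL)).exists
    obtain ⟨n, -, hn⟩ := mem_iUnion₂.1 (Ico_subset_biUnion_Ico m ts ⟨h0 ▸ hs, hm⟩)
    exact hrange n s hn
  exact ⟨b, hb.comp (tendsto_nhdsWithin_iff.2 ⟨hlim, Eventually.of_forall hlt⟩)⟩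

section Metric

variable {S : Type*} [MetricSpace S] {x : Path S}

lemma exists_tendsto_coe_of_dd_lt {α : Type*} {l : Filter α} [l.NeBot] {f : α → OnePoint S}
    {K : Set S} (hK : IsCompact K) (hfK : ∀ᶠ a in l, f a ∈ ((↑) : S → OnePoint S) '' K)
    (hf : ∀ e > 0, ∃ U ∈ l, ∀ a ∈ U, ∀ b ∈ U, dd dist (f a) (f b) < e) :
    ∃ c ∈ K, Tendsto f l (𝓝 (c : OnePoint S)) := by
  set G := comap ((↑) : S → OnePoint S) (map f l)
  have hmapG : map (↑) G = map f l :=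
    map_comap_of_mem (mem_of_superset hfK fun _ ⟨c, _, hc⟩ => ⟨c, hc⟩)
  have hKG : K ∈ G := ⟨_, hfK, (preimage_image_eq K OnePoint.coe_injective).subset⟩
  have : G.NeBot := by
    rw [← map_neBot_iff, hmapG]
    infer_instance
  have hG : Cauchy G := by
    refine Metric.cauchy_iff.2 ⟨inferInstance, fun e he => ?_⟩
    obtain ⟨U, hU, hUe⟩ := hf e he
    refine ⟨(↑) ⁻¹' (f '' U), preimage_mem_comap (image_mem_map hU), ?_⟩
    rintro c ⟨a, ha, hac⟩ c' ⟨b, hb, hbc⟩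
    have h := hUe a ha b hb
    rwa [hac, hbc] at h
  obtain ⟨c, hc, hGc⟩ := hK.isComplete G hG (le_principal_iff.2 hKG)
  refine ⟨c, hc, ?_⟩
  rw [Tendsto, ← hmapG]
  exact (OnePoint.continuous_coe.tendsto c).mono_left (map_mono hGc)

lemma eventually_coe_dist_lt_nhdsGE {v r : ℝ} {b c : S}
    (hv : Tendsto x (𝓝[>] v) (𝓝 (x v))) (hxv : x v = c) (hbc : dist b c < r) :
    ∀ᶠ s in 𝓝[≥] v, ∃ c' : S, x s = c' ∧ dist b c' < r := by
  have h : Tendsto x (𝓝[≥] v) (𝓝 (c : OnePoint S)) :=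
    hxv ▸ continuousWithinAt_Ioi_iff_Ici.1 hv
  have hU : ((↑) : S → OnePoint S) '' Metric.ball b r ∈ 𝓝 (c : OnePoint S) :=
    (OnePoint.isOpenMap_coe _ Metric.isOpen_ball).mem_nhds
      ⟨c, by rwa [Metric.mem_ball, dist_comm], rfl⟩
  filter_upwards [h hU] with s ⟨c', hc', hs⟩
  exact ⟨c', hs.symm, by rwa [Metric.mem_ball, dist_comm] at hc'⟩

def ballExitSet (x : Path S) (T r u : ℝ) : Set ℝ :=
  {s | u < s ∧ (T < s ∨ x s = OnePoint.infty ∨ r < dd dist (x u) (x s))}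

def ballExitTime (x : Path S) (T r u : ℝ) : ℝ := sInf (ballExitSet x T r u)

variable {T r u : ℝ}

lemma ballExitSet_nonempty : (ballExitSet x T r u).Nonempty :=
  ⟨max u T + 1, (le_max_left u T).trans_lt (lt_add_one _),
    Or.inl ((le_max_right u T).trans_lt (lt_add_one _))⟩

lemma isGLB_ballExitTime : IsGLB (ballExitSet x T r u) (ballExitTime x T r u) :=
  isGLB_csInf ballExitSet_nonempty ⟨u, fun _ hs => hs.1.le⟩

lemma le_ballExitTime : u ≤ ballExitTime x T r u :=
  isGLB_ballExitTime.2 fun _ hs => hs.1.le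

lemma exists_coe_dist_le_of_lt_ballExitTime {s : ℝ} {b : S} (hr : 0 ≤ r) (hxu : x u = b)
    (hus : u ≤ s) (hs : s < ballExitTime x T r u) : ∃ c : S, x s = c ∧ dist b c ≤ r := by
  rcases hus.eq_or_lt with rfl | hus
  · exact ⟨b, hxu, by simpa using hr⟩
  have hs' := notMem_of_lt_csInf hs isGLB_ballExitTime.bddBelow
  simp only [ballExitSet, mem_ofPred_eq, not_and, not_or, not_lt] at hs'
  obtain ⟨-, hne, hd⟩ := hs' hus
  obtain ⟨c, hc⟩ := OnePoint.ne_infty_iff_exists.1 hne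
  rw [hxu, ← hc] at hd
  exact ⟨c, hc.symm, hd⟩

lemma ballExitTime_ne {v : ℝ} {b c : S} (hv : Tendsto x (𝓝[>] v) (𝓝 (x v))) (hxu : x u = b)
    (hxv : x v = c) (hvT : v < T) (hbc : dist b c < r) : ballExitTime x T r u ≠ v := by
  rintro rfl
  have hnear : ∀ᶠ s in 𝓝[≥] ballExitTime x T r u, s < T ∧ ∃ c' : S, x s = c' ∧ dist b c' < r :=
    ((eventually_lt_nhds hvT).filter_mono nhdsWithin_le_nhds).and
      (eventually_coe_dist_lt_nhdsGE hv hxv hbc)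
  obtain ⟨s, ⟨-, hexit⟩, hsT, c', hc', hd⟩ :=
    ((isGLB_ballExitTime.frequently_mem ballExitSet_nonempty).and_eventually hnear).exists
  rw [hxu, hc'] at hexit
  rcases hexit with h | h | h
  · exact h.not_gt hsT
  · exact OnePoint.coe_ne_infty c' h
  · exact h.not_gt hd

lemma lt_ballExitTime {b : S} (hu : Tendsto x (𝓝[>] u) (𝓝 (x u))) (hxu : x u = b)
    (huT : u < T) (hr : 0 < r) : u < ballExitTime x T r u :=
  le_ballExitTime.lt_of_ne' (ballExitTime_ne hu hxu hxu huT (by simpa using hr))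

lemma le_dist_of_ballExitTime_eq {v : ℝ} {b c : S} (hv : Tendsto x (𝓝[>] v) (𝓝 (x v)))
    (hxu : x u = b) (hxv : x v = c) (hvT : v < T) (h : ballExitTime x T r u = v) :
    r ≤ dist b c :=
  not_lt.1 fun hbc => ballExitTime_ne hv hxu hxv hvT hbc h

def ballExitTimes (x : Path S) (T r : ℝ) (n : ℕ) : ℝ := (ballExitTime x T r)^[n] 0

lemma ballExitTimes_succ (x : Path S) (T r : ℝ) (n : ℕ) :
    ballExitTimes x T r (n + 1) = ballExitTime x T r (ballExitTimes x T r n) :=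
  Function.iterate_succ_apply' _ n 0

lemma ballExitTimes_nonneg (n : ℕ) : 0 ≤ ballExitTimes x T r n := by
  induction n with
  | zero => exact le_rfl
  | succ n ih => exact ih.trans (ballExitTimes_succ x T r n ▸ le_ballExitTime)

lemma IsDexp.ballExitTimes_lt_succ (hx : IsDexp x) (hr : 0 < r) {n : ℕ} {a : S}
    (hT : ballExitTimes x T r n < T) (ha : x (ballExitTimes x T r n) = a) :
    ballExitTimes x T r n < ballExitTimes x T r (n + 1) :=
  ballExitTimes_succ x T r n ▸
    lt_ballExitTime (hx.tendsto_nhdsGT (ballExitTimes_nonneg n) ha) ha hT hr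

lemma IsDloc.exists_not_mem_ballExitTimes (hx : IsDloc x) (t : ℝ) {r₀ : ℝ} {K : Set S}
    (hK : IsCompact (Metric.cthickening r₀ K)) (hr : 0 < r) (hr₀ : r ≤ r₀) :
    ∃ n, ¬ (ballExitTimes x (t + 1) r n ≤ t ∧ ∃ a ∈ K, x (ballExitTimes x (t + 1) r n) = a) := by
  set ts := ballExitTimes x (t + 1) r
  by_contra! hall
  choose hle a haK hxa using hall
  have hts : StrictMono ts := strictMono_nat_of_lt_succ fun n =>
    hx.1.ballExitTimes_lt_succ hr (by linarith [hle n]) (hxa n)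
  obtain ⟨b, hb⟩ := hx.exists_tendsto_comp_of_strictMono hK hts rfl
    ⟨t, forall_mem_range.2 hle⟩ fun n s hs => by
      obtain ⟨c, hc, hd⟩ := exists_coe_dist_le_of_lt_ballExitTime hr.le (hxa n) hs.1
        (hs.2.trans_eq (ballExitTimes_succ x (t + 1) r n))
      refine ⟨c, Metric.mem_cthickening_of_dist_le c (a n) r₀ K (haK n) ?_, hc⟩
      rw [dist_comm]
      exact hd.trans hr₀
  have ha : Tendsto a atTop (𝓝 b) := by
    refine OnePoint.isOpenEmbedding_coe.isInducing.tendsto_nhds_iff.2 ?_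
    simpa only [Function.comp_def, ← hxa] using hb
  have hjump (n : ℕ) : r ≤ dist (a n) (a (n + 1)) :=
    le_dist_of_ballExitTime_eq (hx.1.tendsto_nhdsGT (ballExitTimes_nonneg _) (hxa (n + 1)))
      (hxa n) (hxa (n + 1)) (by linarith [hle (n + 1)])
      (ballExitTimes_succ x (t + 1) r n).symm
  have hdist : Tendsto (fun n => dist (a n) (a (n + 1))) atTop (𝓝 0) := by
    simpa using ha.dist (ha.comp (tendsto_add_atTop_nat 1))
  exact hr.not_ge (ge_of_tendsto hdist (Eventually.of_forall hjump))

lemma IsDloc.exists_isOmegaPartition [LocallyCompactSpace S] (hx : IsDloc x) (t : ℝ) {K : Set S}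
    (hK : IsCompact K) {ε : ℝ} (hε : 0 < ε) :
    ∃ N ts, IsOmegaPartition t K x 0 N ts ∧
      ∀ i < N, ∀ s₁ ∈ Ico (ts i) (ts (i + 1)), ∀ s₂ ∈ Ico (ts i) (ts (i + 1)),
        dd dist (x s₁) (x s₂) ≤ ε := by
  classical
  obtain ⟨r₀, hr₀, hK'⟩ := hK.exists_isCompact_cthickening
  set r := min (ε / 2) r₀
  have hr : 0 < r := lt_min (half_pos hε) hr₀
  set ts := ballExitTimes x (t + 1) r
  have hexit := hx.exists_not_mem_ballExitTimes t hK' hr (min_le_right _ _)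
  have hbefore {i : ℕ} (hi : i < Nat.find hexit) : ts i ≤ t ∧ ∃ a ∈ K, x (ts i) = a :=
    not_not.1 (Nat.find_min hexit hi)
  have hstay {i : ℕ} (hi : i < Nat.find hexit) :
      ∃ a : S, ∀ s ∈ Ico (ts i) (ts (i + 1)), ∃ c : S, x s = c ∧ dist a c ≤ r := by
    obtain ⟨-, a, -, ha⟩ := hbefore hi
    exact ⟨a, fun s hs => exists_coe_dist_le_of_lt_ballExitTime hr.le ha hs.1
      (hs.2.trans_eq (ballExitTimes_succ x (t + 1) r i))⟩
  refine ⟨Nat.find hexit, ts, ⟨rfl, fun i hi => ?_, fun s hs hsN => ?_, Nat.find_spec hexit⟩,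
    fun i hi s₁ hs₁ s₂ hs₂ => ?_⟩
  · obtain ⟨hle, a, -, ha⟩ := hbefore hi
    simpa using hx.1.ballExitTimes_lt_succ hr (by linarith) ha
  · obtain ⟨i, hi, hsi⟩ := mem_iUnion₂.1 (Ico_subset_biUnion_Ico _ ts ⟨hs, hsN⟩)
    obtain ⟨a, ha⟩ := hstay (Finset.mem_range.1 hi)
    obtain ⟨c, hc, -⟩ := ha s hsi
    simp [hc]
  · obtain ⟨a, ha⟩ := hstay hi
    obtain ⟨c₁, hc₁, hd₁⟩ := ha s₁ hs₁
    obtain ⟨c₂, hc₂, hd₂⟩ := ha s₂ hs₂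
    rw [hc₁, hc₂]
    calc dist c₁ c₂ ≤ dist a c₁ + dist a c₂ := dist_triangle_left _ _ _
      _ ≤ ε := by linarith [min_le_left (ε / 2) r₀]

end Metric

theorem isDloc_iff_omegaMod_general
    {S : Type*} [MetricSpace S] [LocallyCompactSpace S]
    (x : Path S) (hx : IsDexp x) :
    IsDloc x ↔
      ∀ t : ℝ, 0 ≤ t → ∀ K : Set S, IsCompact K →
        Tendsto (fun δ : ℝ => omegaMod dist t K x δ) (𝓝[>] (0:ℝ)) (𝓝 0) := by
  refine ⟨fun hloc t _ K hK => ENNReal.tendsto_nhds_zero.2 fun ε hε => ?_,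
    fun h => ⟨hx, fun ⟨hexp, hpos, hcomp⟩ => ?_⟩⟩
  · obtain ⟨e, -, he, heε⟩ := ENNReal.lt_iff_exists_real_btwn.1 hε
    obtain ⟨N, ts, hp, hosc⟩ := hloc.exists_isOmegaPartition t hK (ENNReal.ofReal_pos.1 he)
    filter_upwards [nhdsWithin_le_nhds hp.eventually_nhds] with δ hδ
    exact (omegaMod_le_ofReal hδ hosc).trans heε.le
  have hξ := isLeast_xiR hx.2.2.1 hexp hpos
  have hrange : ∀ᶠ s in 𝓝[<] xiR x, x s ∈ ((↑) : S → OnePoint S) '' closure (pathRange x) := by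
    filter_upwards [Ioo_mem_nhdsLT hpos] with s hs
    obtain ⟨c, hc⟩ := OnePoint.ne_infty_iff_exists.1 fun h => (hξ.2 h).not_gt hs.2
    exact ⟨c, subset_closure ⟨s, hs.1.le, hc.symm⟩, hc⟩
  have hcauchy (e : ℝ) (he : 0 < e) :
      ∃ U ∈ 𝓝[<] xiR x, ∀ s₁ ∈ U, ∀ s₂ ∈ U, dd dist (x s₁) (x s₂) < e := by
    obtain ⟨δ, hδ, hδpos⟩ := ((h _ hpos.le _ hcomp).eventually
      (gt_mem_nhds (ENNReal.ofReal_pos.2 he))).and self_mem_nhdsWithin |>.exists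
    obtain ⟨t', ht', hosc⟩ :=
      exists_lt_forall_dd_lt_of_omegaMod_lt hξ hpos subset_closure (le_of_lt hδpos) hδ
    exact ⟨Ico t' (xiR x), Ico_mem_nhdsLT ht', hosc⟩
  obtain ⟨c, -, hc⟩ := exists_tendsto_coe_of_dd_lt hcomp hrange hcauchy
  exact ⟨c, hc⟩

/-- (Proposition 2.8 i)). A path `x ∈ 𝔻_exp(S)` belongs to `𝔻_loc(S)` if
and only if for every `t ≥ 0` and every compact `K ⊆ S`, `ω'_{t,K,x}(δ) → 0` as `δ → 0`. -/
theorem isDloc_iff_omegaMod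
    {S : Type*} [MetricSpace S] [SecondCountableTopology S] [LocallyCompactSpace S]
    (x : Path S) (hx : IsDexp x) :
    IsDloc x ↔
      ∀ t : ℝ, 0 ≤ t → ∀ K : Set S, IsCompact K →
        Tendsto (fun δ : ℝ => omegaMod dist t K x δ) (𝓝[>] (0:ℝ)) (𝓝 0) :=
  isDloc_iff_omegaMod_general x hx

end LocSkor
end
end
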